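/- Final-state correspondence in the subset construction: with A a GNFSTA with pure states, A' its subset-construction DFSTA, and t ∈ T(Σ) with counterpart t' ∈ T(Σ'), there exist q_f ∈ Q_f and n with t ⇒ⁿ ⟨q_f/⟩ if and only if there exist q'_f ∈ Q'_f and m with t' ⇒ᵐ_{A'} ⟨q'_f/⟩; consequently t ∈ L(A) if and only if t' ∈ L(A'). -/

import Mathlib

/-!  Common definitions: string trees over an alphabet (following
N. Schmidt, A. Patel, "Using Tree Automata and Regular Expressions to
Manipulate Hierarchically Structured Data").

Symbols: an ambient type `U` of "plain" symbols, extended with the two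
angle brackets and the slash. -/

inductive TSym (U : Type) : Type where
  | op : TSym U          -- ⟨
  | cl : TSym U          -- ⟩
  | slash : TSym U       -- /
  | ltr : U → TSym U     -- a plain symbol

namespace StringTree

variable {U V : Type}

/-- The letters of an alphabet `S ⊆ U`, viewed as (non-bracket) symbols. -/
def ltrs (S : Set U) : Set (TSym U) := {x | ∃ a ∈ S, x = TSym.ltr a}

/-- String trees over a set `S` of allowed non-bracket symbols:
`⟨⟩ ∈ T`, `⟨a⟩ ∈ T` for `a ∈ S`, closed under concatenation
`⟨x⟩·⟨y⟩ = ⟨xy⟩` and encapsulation `t ↦ ⟨t⟩`. -/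
inductive IsTree (S : Set (TSym U)) : List (TSym U) → Prop where
  | nil : IsTree S [TSym.op, TSym.cl]
  | single {x : TSym U} : x ∈ S → IsTree S [TSym.op, x, TSym.cl]
  | concat {x y : List (TSym U)} :
      IsTree S (TSym.op :: (x ++ [TSym.cl])) → IsTree S (TSym.op :: (y ++ [TSym.cl])) →
      IsTree S (TSym.op :: ((x ++ y) ++ [TSym.cl]))
  | encap {t : List (TSym U)} : IsTree S t → IsTree S (TSym.op :: (t ++ [TSym.cl]))

/-- `T(Σ)`, the set of string trees over the alphabet `Σ ⊆ U`. -/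
def TreeSet (S : Set U) : Set (List (TSym U)) := {t | IsTree (ltrs S) t}

/-- A plain string, viewed as a string of symbols. -/
def strOf (s : List U) : List (TSym U) := s.map TSym.ltr

/-- Move relation of a generalised non-deterministic finite string tree
automaton with initial states `Q0`, horizontal rules `Δ` and vertical
rules `γ`:
(a) `l⟨s⟩r ⇒ l⟨a/s⟩r` if `a ∈ Q0` (initial state assignment);
(b) `l⟨a/bs⟩r ⇒ l⟨c/s⟩r` if `(a,b) → c ∈ Δ` (horizontal move);
(c) `l⟨a/⟩r ⇒ lbr` if `b ∈ γ a` (vertical move). -/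
inductive GMove (Q0 : Set U) (Δ : Set (U × U × U)) (γ : U → Set U) :
    List (TSym U) → List (TSym U) → Prop where
  | init {l r : List (TSym U)} {s : List U} {a : U} :
      a ∈ Q0 →
      GMove Q0 Δ γ (l ++ [TSym.op] ++ strOf s ++ [TSym.cl] ++ r)
        (l ++ [TSym.op, TSym.ltr a, TSym.slash] ++ strOf s ++ [TSym.cl] ++ r)
  | horiz {l r : List (TSym U)} {s : List U} {a b c : U} :
      (a, b, c) ∈ Δ →
      GMove Q0 Δ γ (l ++ [TSym.op, TSym.ltr a, TSym.slash, TSym.ltr b] ++ strOf s ++ [TSym.cl] ++ r)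
        (l ++ [TSym.op, TSym.ltr c, TSym.slash] ++ strOf s ++ [TSym.cl] ++ r)
  | vert {l r : List (TSym U)} {a b : U} :
      b ∈ γ a →
      GMove Q0 Δ γ (l ++ [TSym.op, TSym.ltr a, TSym.slash, TSym.cl] ++ r)
        (l ++ [TSym.ltr b] ++ r)

/-- Move relation of an NFSTA: the GNFSTA moves with the single initial
state `q0` and with the vertical move `l⟨a/⟩r ⇒ lar`. -/
def NMove (q0 : U) (Δ : Set (U × U × U)) : List (TSym U) → List (TSym U) → Prop :=
  GMove {q0} Δ (fun a => {a})

/-- The final tree `⟨q/⟩`. -/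
def finalTree (q : U) : List (TSym U) := [TSym.op, TSym.ltr q, TSym.slash, TSym.cl]

/-- Acceptance by a GNFSTA: `t ⇒* ⟨q_f/⟩` for some `q_f ∈ Q_f`. -/
def GAccepts (Q0 : Set U) (Δ : Set (U × U × U)) (γ : U → Set U) (Qf : Set U)
    (t : List (TSym U)) : Prop :=
  ∃ qf ∈ Qf, Relation.ReflTransGen (GMove Q0 Δ γ) t (finalTree qf)

/-- The language of a GNFSTA: the set of trees of `T(Σ)` it accepts. -/
def GLang (Sa Q0 : Set U) (Δ : Set (U × U × U)) (γ : U → Set U) (Qf : Set U) :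
    Set (List (TSym U)) :=
  {t | t ∈ TreeSet Sa ∧ GAccepts Q0 Δ γ Qf t}

/-- Acceptance by an NFSTA. -/
def NAccepts (q0 : U) (Δ : Set (U × U × U)) (Qf : Set U) (t : List (TSym U)) : Prop :=
  GAccepts {q0} Δ (fun a => {a}) Qf t

/-- The language of an NFSTA. -/
def NLang (Sa : Set U) (q0 : U) (Δ : Set (U × U × U)) (Qf : Set U) : Set (List (TSym U)) :=
  GLang Sa {q0} Δ (fun a => {a}) Qf

/-- Well-formedness of a GNFSTA `(Σ, Q, Q_f, Q₀, Δ, γ)`: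
`Q` is finite, `Σ ⊆ Q`, `Q_f ⊆ Q`, `Q₀ ⊆ Q`, the rules of `Δ` are over `Q`,
and `γ` maps states of `Q` to sets of states of `Q`. -/
def GWF (Sa Q Qf Q0 : Set U) (Δ : Set (U × U × U)) (γ : U → Set U) : Prop :=
  Q.Finite ∧ Sa ⊆ Q ∧ Qf ⊆ Q ∧ Q0 ⊆ Q ∧
    (∀ p ∈ Δ, p.1 ∈ Q ∧ p.2.1 ∈ Q ∧ p.2.2 ∈ Q) ∧ (∀ q ∈ Q, γ q ⊆ Q)

/-- Well-formedness of an NFSTA `(Σ, Q, Q_f, q₀, Δ)`. -/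
def NWF (Sa Q Qf : Set U) (q0 : U) (Δ : Set (U × U × U)) : Prop :=
  Q.Finite ∧ Sa ⊆ Q ∧ Qf ⊆ Q ∧ q0 ∈ Q ∧ ∀ p ∈ Δ, p.1 ∈ Q ∧ p.2.1 ∈ Q ∧ p.2.2 ∈ Q

/-- A GNFSTA has pure states: no horizontal or vertical rule produces a
symbol of `Σ`, no horizontal rule has its state (first) component in `Σ`,
`γ(a) = ∅` for `a ∈ Σ`, and `Q₀ ∪ Q_f ⊆ Q ∖ Σ`. -/
def PureG (Sa Q Qf Q0 : Set U) (Δ : Set (U × U × U)) (γ : U → Set U) : Prop :=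
  (∀ p ∈ Δ, p.1 ∉ Sa ∧ p.2.2 ∉ Sa) ∧ (∀ a ∈ Sa, γ a = ∅) ∧
    (∀ q : U, ∀ p ∈ γ q, p ∉ Sa) ∧ Q0 ⊆ Q \ Sa ∧ Qf ⊆ Q \ Sa

/-- An NFSTA has pure states. -/
def PureN (Sa Q Qf : Set U) (q0 : U) (Δ : Set (U × U × U)) : Prop :=
  (∀ p ∈ Δ, p.1 ∉ Sa ∧ p.2.2 ∉ Sa) ∧ q0 ∈ Q \ Sa ∧ Qf ⊆ Q \ Sa


/-! Additional notions. -/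

/-- `⟨s₀ t₁ s₁ ⋯ tₙ sₙ⟩`: the string tree assembled from a head string `s₀`
and a list of pairs `(tᵢ, sᵢ)` of a subtree and a following string. -/
def flatRep (s0 : List U) (rest : List (List (TSym U) × List U)) : List (TSym U) :=
  TSym.op :: (strOf s0 ++ (rest.map (fun p => p.1 ++ strOf p.2)).flatten ++ [TSym.cl])

/-- The inner string of a tree `⟨x⟩`, i.e. `x`. -/
def innerStr (t : List (TSym U)) : List (TSym U) := (t.drop 1).dropLast

/-- Tree concatenation `⟨x⟩·⟨y⟩ = ⟨xy⟩`. -/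
def tconc (u v : List (TSym U)) : List (TSym U) :=
  TSym.op :: ((innerStr u ++ innerStr v) ++ [TSym.cl])

/-- The null tree `⟨⟩`. -/
def nilTree : List (TSym U) := [TSym.op, TSym.cl]

/-- `w` is a string over `Q ∪ {/}`. -/
def OverQSlash (Q : Set U) (w : List (TSym U)) : Prop :=
  ∀ x ∈ w, x = TSym.slash ∨ ∃ q ∈ Q, x = TSym.ltr q

/-- Renaming of symbols along a map of plain symbols. -/
def symRel (f : U → V) : TSym U → TSym V
  | TSym.op => TSym.op
  | TSym.cl => TSym.cl
  | TSym.slash => TSym.slash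
  | TSym.ltr a => TSym.ltr (f a)

/-- Renaming of the symbols of a tree along a map of plain symbols. -/
def treeRel (f : U → V) (t : List (TSym U)) : List (TSym V) := t.map (symRel f)

/-- The injective renaming `a ↦ {a}`. -/
def sing : U → Set U := fun a => {a}

/-- The vertical-rule function `γ` of a pure-state GNFSTA, extended by
`γ(a) = {a}` for `a ∈ Σ` and to sets by unions: `γ(b') = ⋃_{b ∈ b'} γ(b)`. -/
def gammaExt (Sa : Set U) (γ : U → Set U) (b' : Set U) : Set U :=
  {c | ∃ b ∈ b', c ∈ γ b ∨ (c = b ∧ b ∈ Sa)}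

/-- The transition function of the subset construction:
`Δ'(a', b') = {c | (a,b) → c ∈ Δ, a ∈ a', b ∈ γ(b')}`. -/
def subsetDelta (Sa : Set U) (γ : U → Set U) (Δ : Set (U × U × U)) (a' b' : Set U) : Set U :=
  {c | ∃ a ∈ a', ∃ b ∈ gammaExt Sa γ b', (a, b, c) ∈ Δ}

/-- The rule set of the subset-construction DFSTA, defined on pairs of
subsets of `Q`. -/
def subsetRules (Sa : Set U) (γ : U → Set U) (Δ : Set (U × U × U)) (Q : Set U) :
    Set (Set U × Set U × Set U) :=
  {x | x.1 ⊆ Q ∧ x.2.1 ⊆ Q ∧ x.2.2 = subsetDelta Sa γ Δ x.1 x.2.1}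

/-- A rule set is deterministic: at most one rule per left-hand side. -/
def Deterministic {α : Type} (Δ : Set (α × α × α)) : Prop :=
  ∀ a b c₁ c₂, (a, b, c₁) ∈ Δ → (a, b, c₂) ∈ Δ → c₁ = c₂

/-- `L` is recognised by some GNFSTA over the alphabet `Sa`. -/
def RecogG (Sa : Set U) (L : Set (List (TSym U))) : Prop :=
  ∃ Q Qf Q0 Δ γ, GWF Sa Q Qf Q0 Δ γ ∧ GLang Sa Q0 Δ γ Qf = L

/-- `L` is recognised by some NFSTA over the alphabet `Sa`. -/
def RecogN (Sa : Set U) (L : Set (List (TSym U))) : Prop :=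
  ∃ Q Qf q0 Δ, NWF Sa Q Qf q0 Δ ∧ NLang Sa q0 Δ Qf = L

/-- `L` is recognised, after the injective alphabet renaming `a ↦ {a}`,
by some deterministic FSTA. -/
def RecogD (Sa : Set U) (L : Set (List (TSym U))) : Prop :=
  ∃ (Q' Qf' : Set (Set U)) (q0' : Set U) (Δ' : Set (Set U × Set U × Set U)),
    NWF (sing '' Sa) Q' Qf' q0' Δ' ∧ Deterministic Δ' ∧
    NLang (sing '' Sa) q0' Δ' Qf' = treeRel sing '' L

/-- Runs of a classical finite (string) automaton with transition map `δ`. -/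
inductive FASteps (δ : U → U → Set U) : U → List U → U → Prop where
  | nil (q : U) : FASteps δ q [] q
  | cons {q a p s q'} : p ∈ δ q a → FASteps δ p s q' → FASteps δ q (a :: s) q'

/-- The language of a classical finite automaton `(Sa, Q, Q_f, q₀, δ)`. -/
def FALang (Sa : Set U) (δ : U → U → Set U) (q0 : U) (Qf : Set U) : Set (List U) :=
  {s | (∀ a ∈ s, a ∈ Sa) ∧ ∃ qf ∈ Qf, FASteps δ q0 s qf}

/-- `n`-fold composition of a relation: `relPow r n a b` iff `a ⇒ⁿ b`. -/
def relPow {α : Type} (r : α → α → Prop) : ℕ → α → α → Prop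
  | 0, a, b => a = b
  | n + 1, a, c => ∃ b, r a b ∧ relPow r n b c


/-! Ranked terms and classical tree automata. -/

/-- Unranked terms (rose trees) over a symbol type `F`. -/
inductive PreTerm (F : Type) : Type where
  | node : F → List (PreTerm F) → PreTerm F

/-- A term is well-ranked w.r.t. an arity function. -/
inductive WellRanked {F : Type} (ar : F → ℕ) : PreTerm F → Prop where
  | node {f : F} {ts : List (PreTerm F)} : ts.length = ar f →
      (∀ t ∈ ts, WellRanked ar t) → WellRanked ar (PreTerm.node f ts)

/-- The term-to-string-tree map `τ`:
`τ(f(t₁,…,t_p)) = ⟨f τ(t₁) ⋯ τ(t_p)⟩` (and `τ(a) = ⟨a⟩` for constants). -/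
def tau {F : Type} : PreTerm F → List (TSym F)
  | PreTerm.node f ts =>
      TSym.op :: TSym.ltr f :: ((ts.attach.map (fun x => tau x.1)).flatten ++ [TSym.cl])
  decreasing_by
    simp only [PreTerm.node.sizeOf_spec]
    have h := List.sizeOf_lt_of_mem x.2
    omega

/-- A term over the ranked alphabet given by symbols `Sa` and arities `ar`. -/
inductive GoodTerm (Sa : Set U) (ar : U → ℕ) : PreTerm U → Prop where
  | node {f : U} {ts : List (PreTerm U)} : f ∈ Sa → ts.length = ar f →
      (∀ t ∈ ts, GoodTerm Sa ar t) → GoodTerm Sa ar (PreTerm.node f ts)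

/-- Bottom-up runs of a classical tree automaton with rules
`f(q₁,…,qₙ) → q`: `CRun Δh t q` means the run assigns state `q` to `t`. -/
inductive CRun (Δh : Set (U × List U × U)) : PreTerm U → U → Prop where
  | node {f : U} {ts : List (PreTerm U)} {qs : List U} {q : U} :
      (f, qs, q) ∈ Δh → qs.length = ts.length →
      (∀ p ∈ ts.zip qs, CRun Δh p.1 p.2) →
      CRun Δh (PreTerm.node f ts) q

/-- The term language of a classical tree automaton. -/
def TermLang (Sa : Set U) (ar : U → ℕ) (Δh : Set (U × List U × U)) (Qhf : Set U) :
    Set (PreTerm U) :=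
  {t | GoodTerm Sa ar t ∧ ∃ q ∈ Qhf, CRun Δh t q}

/-! Vertical tree representation of strings. -/

def omegaRev : List U → List (TSym U)
  | [] => [TSym.op, TSym.cl]
  | a :: s => TSym.op :: (omegaRev s ++ [TSym.ltr a, TSym.cl])

/-- The vertical tree representation `ω(a₁⋯aₙ) = ⟨⟨⋯⟨⟩a₁⟩a₂⟩⋯aₙ⟩`,
defined by `ω(ε) = ⟨⟩` and `ω(sa) = ⟨ω(s)⟩·⟨a⟩`. -/
def omega (s : List U) : List (TSym U) := omegaRev s.reverse

/-! Regular string tree grammars. -/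

/-- A regular expression is over the symbol set `S`. -/
def REOver (S : Set U) : RegularExpression U → Prop
  | RegularExpression.zero => True
  | RegularExpression.epsilon => True
  | RegularExpression.char a => a ∈ S
  | RegularExpression.plus e₁ e₂ => REOver S e₁ ∧ REOver S e₂
  | RegularExpression.comp e₁ e₂ => REOver S e₁ ∧ REOver S e₂
  | RegularExpression.star e => REOver S e

/-- One derivation step of a regular string tree grammar with rule set `R`:
`lXr →_G l⟨x⟩r` whenever `X → ⟨e⟩ ∈ R` and `x ∈ ⟦e⟧`. -/
def GDeriv (R : Set (U × RegularExpression U)) (u v : List (TSym U)) : Prop :=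
  ∃ (l r : List (TSym U)) (X : U) (e : RegularExpression U) (x : List U),
    (X, e) ∈ R ∧ x ∈ e.matches' ∧
    u = l ++ [TSym.ltr X] ++ r ∧ v = l ++ (TSym.op :: (strOf x ++ [TSym.cl])) ++ r

/-- The language generated by a regular string tree grammar with axiom `S`:
all trees of `T(Σ)` derivable from `S`. -/
def GramLang (Sa : Set U) (S : U) (R : Set (U × RegularExpression U)) :
    Set (List (TSym U)) :=
  {t | t ∈ TreeSet Sa ∧ Relation.ReflTransGen (GDeriv R) [TSym.ltr S] t}

/-- Well-formedness of a regular string tree grammar `(Σ, N, S, R)`. -/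
def GramWF (Sa N : Set U) (S : U) (R : Set (U × RegularExpression U)) : Prop :=
  N.Finite ∧ Disjoint N Sa ∧ S ∈ N ∧ ∀ p ∈ R, p.1 ∈ N ∧ REOver (Sa ∪ N) p.2

/-! The map `Γ` and the instance relation `⊴` of the subset-construction
equivalence proof. -/

/-- `Γ` applies (the extension of) `γ` to every set-symbol that is not
immediately followed by a slash:
`Γ(ε)=ε`, `Γ(⟨s)=⟨Γ(s)`, `Γ(⟩s)=⟩Γ(s)`, `Γ(a/s)=a/Γ(s)`, `Γ(as)=γ(a)Γ(s)`. -/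
def GammaMap (g : Set U → Set U) : List (TSym (Set U)) → List (TSym (Set U))
  | [] => []
  | TSym.op :: s => TSym.op :: GammaMap g s
  | TSym.cl :: s => TSym.cl :: GammaMap g s
  | TSym.slash :: s => TSym.slash :: GammaMap g s
  | TSym.ltr a :: TSym.slash :: s => TSym.ltr a :: TSym.slash :: GammaMap g s
  | TSym.ltr a :: s => TSym.ltr (g a) :: GammaMap g s

/-- Symbol-wise instance relation: brackets and slashes match, and a plain
symbol is an element of the corresponding set-symbol. -/
inductive SymInst : TSym U → TSym (Set U) → Prop where
  | op : SymInst TSym.op TSym.op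
  | cl : SymInst TSym.cl TSym.cl
  | slash : SymInst TSym.slash TSym.slash
  | ltr {a : U} {A : Set U} : a ∈ A → SymInst (TSym.ltr a) (TSym.ltr A)

/-- `v ⊴ v'`: `v` is an instance of `v'`. -/
def Inst (v : List (TSym U)) (v' : List (TSym (Set U))) : Prop :=
  List.Forall₂ SymInst v v'

end StringTree

namespace StringTree


/-! ### Auxiliary development for the subset construction -/

section Aux

variable {U : Type}

open TSym

/-- weight of a symbol for bracket balance -/
def wt : TSym U → ℤ
  | TSym.op => 1
  | TSym.cl => -1
  | _ => 0

/-- bracket balance of a string -/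
def bal (x : List (TSym U)) : ℤ := (x.map wt).sum

@[simp] lemma bal_nil : bal ([] : List (TSym U)) = 0 := rfl

@[simp] lemma bal_cons (c : TSym U) (x : List (TSym U)) :
    bal (c :: x) = wt c + bal x := by simp [bal]

@[simp] lemma bal_append (x y : List (TSym U)) : bal (x ++ y) = bal x + bal y := by
  simp [bal]

@[simp] lemma wt_op : wt (TSym.op : TSym U) = 1 := rfl
@[simp] lemma wt_cl : wt (TSym.cl : TSym U) = -1 := rfl
@[simp] lemma wt_slash : wt (TSym.slash : TSym U) = 0 := rfl
@[simp] lemma wt_ltr (a : U) : wt (TSym.ltr a) = 0 := rfl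

@[simp] lemma bal_strOf (s : List U) : bal (strOf s) = 0 := by
  induction s with
  | nil => rfl
  | cons a s ih => simp [strOf] at ih ⊢; simp [ih]

lemma cl_not_mem_strOf (s : List U) : TSym.cl ∉ strOf s := by
  simp [strOf]

lemma slash_not_mem_strOf (s : List U) : TSym.slash ∉ strOf s := by
  simp [strOf]

/-- balance-zero with nonnegative prefixes -/
def Bal0 (x : List (TSym U)) : Prop :=
  bal x = 0 ∧ ∀ p q : List (TSym U), x = p ++ q → 0 ≤ bal p

lemma bal0_strOf (s : List U) : Bal0 (strOf s) := by
  constructor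
  · simp
  · intro p q hpq
    have : ∀ c ∈ p, wt c = 0 := by
      intro c hc
      have : c ∈ strOf s := by rw [hpq]; exact List.mem_append_left _ hc
      obtain ⟨a, -, rfl⟩ := by simpa [strOf] using this
      rfl
    have : bal p = 0 := by
      simp only [bal]
      rw [List.sum_eq_zero]
      intro z hz
      obtain ⟨c, hc, rfl⟩ := List.mem_map.1 hz
      exact this c hc
    omega

/-- unique decomposition of a string as `x ++ cl :: w` with `Bal0 x` -/
lemma bal0_uniq {x y w w' : List (TSym U)} (hx : Bal0 x) (hy : Bal0 y)
    (h : x ++ TSym.cl :: w = y ++ TSym.cl :: w') : x = y ∧ w = w' := by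
  rcases List.append_eq_append_iff.1 h with ⟨t, ht, h2⟩ | ⟨t, ht, h2⟩
  · rcases t with _ | ⟨c, t⟩
    · simp at ht h2; exact ⟨ht.symm, by simpa using h2⟩
    · obtain ⟨rfl, rfl⟩ : c = TSym.cl ∧ w = t ++ TSym.cl :: w' := by
        constructor <;> [skip; skip] <;> injection h2 with h3 h4 <;> simp_all
      have := hy.2 (x ++ [TSym.cl]) t (by simpa using ht)
      have hbx := hx.1
      simp at this
      omega
  · rcases t with _ | ⟨c, t⟩
    · simp at ht h2; exact ⟨ht, by simp [h2]⟩
    · obtain ⟨rfl, rfl⟩ : c = TSym.cl ∧ w' = t ++ TSym.cl :: w := by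
        constructor <;> injection h2 with h3 h4 <;> simp_all
      have := hx.2 (y ++ [TSym.cl]) t (by simpa using ht)
      have hby := hy.1
      simp at this
      omega

end Aux


section Aux2

variable {U : Type} (Q0 : Set U) (Δ : Set (U × U × U)) (γ : U → Set U)

/-- horizontal processing of a letter string -/
inductive Horiz (Δ : Set (U × U × U)) : U → List U → U → Prop where
  | nil (a : U) : Horiz Δ a [] a
  | cons {a b c q : U} {s : List U} : (a, b, c) ∈ Δ → Horiz Δ c s q →
      Horiz Δ a (b :: s) q

/-- big-step evaluation of a configuration string to a plain letter string -/
inductive SEval (Q0 : Set U) (Δ : Set (U × U × U)) (γ : U → Set U) :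
    List (TSym U) → List U → Prop where
  | nil : SEval Q0 Δ γ [] []
  | ltr {a : U} {w : List (TSym U)} {s : List U} :
      SEval Q0 Δ γ w s → SEval Q0 Δ γ (TSym.ltr a :: w) (a :: s)
  | tree {a q b : U} {x w : List (TSym U)} {s₁ s : List U} :
      a ∈ Q0 → SEval Q0 Δ γ x s₁ → Horiz Δ a s₁ q → b ∈ γ q →
      SEval Q0 Δ γ w s →
      SEval Q0 Δ γ (TSym.op :: (x ++ TSym.cl :: w)) (b :: s)
  | ptree {a q b : U} {x w : List (TSym U)} {s₁ s : List U} :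
      SEval Q0 Δ γ x s₁ → Horiz Δ a s₁ q → b ∈ γ q →
      SEval Q0 Δ γ w s →
      SEval Q0 Δ γ (TSym.op :: TSym.ltr a :: TSym.slash :: (x ++ TSym.cl :: w)) (b :: s)

variable {Q0 Δ γ}

lemma seval_bal {x : List (TSym U)} {s : List U} (h : SEval Q0 Δ γ x s) : bal x = 0 := by
  induction h with
  | nil => rfl
  | ltr _ ih => simpa using ih
  | tree _ _ _ _ _ ihx ihw => simp [ihx, ihw]
  | ptree _ _ _ _ ihx ihw => simp [ihx, ihw]

lemma seval_prefix {x : List (TSym U)} {s : List U} (h : SEval Q0 Δ γ x s) :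
    ∀ p q : List (TSym U), x = p ++ q → 0 ≤ bal p := by
  induction h with
  | nil =>
    intro p q hpq
    have : p = [] := by simpa using (List.append_eq_nil_iff.1 hpq.symm).1
    simp [this]
  | @ltr a w s _ ih =>
    intro p q hpq
    rcases p with _ | ⟨c, p⟩
    · simp
    · injection hpq with h1 h2; subst h1
      have := ih p q h2
      simpa using this
  | @tree a qq b x w s₁ s _ hx _ _ _ ihx ihw =>
    intro p q hpq
    rcases p with _ | ⟨c, p⟩
    · simp
    · injection hpq with h1 h2; subst h1
      rcases List.append_eq_append_iff.1 h2.symm with ⟨t, ht, h3⟩ | ⟨t, ht, h3⟩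
      · have h5 := ihx p t ht
        simp only [bal_cons, wt_op, wt_ltr, wt_slash]; omega
      · rcases t with _ | ⟨c2, t⟩
        · simp [ht, seval_bal hx]
        · obtain ⟨rfl, rfl⟩ : c2 = TSym.cl ∧ w = t ++ q := by
            constructor <;> injection h3 with h4 h5 <;> simp_all
          have := ihw t q rfl
          simp [ht, seval_bal hx]
          omega
  | @ptree a qq b x w s₁ s hx _ _ _ ihx ihw =>
    intro p q hpq
    rcases p with _ | ⟨c, p⟩
    · simp
    · injection hpq with h1 h2; subst h1
      rcases p with _ | ⟨c, p⟩
      · simp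
      · injection h2 with h1 h2; subst h1
        rcases p with _ | ⟨c, p⟩
        · simp
        · injection h2 with h1 h2; subst h1
          rcases List.append_eq_append_iff.1 h2.symm with ⟨t, ht, h3⟩ | ⟨t, ht, h3⟩
          · have h5 := ihx p t ht
            simp only [bal_cons, wt_op, wt_ltr, wt_slash]; omega
          · rcases t with _ | ⟨c2, t⟩
            · simp [ht, seval_bal hx]
            · obtain ⟨rfl, rfl⟩ : c2 = TSym.cl ∧ w = t ++ q := by
                constructor <;> injection h3 with h4 h5 <;> simp_all
              have := ihw t q rfl
              simp [ht, seval_bal hx]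
              omega

lemma seval_bal0 {x : List (TSym U)} {s : List U} (h : SEval Q0 Δ γ x s) : Bal0 x :=
  ⟨seval_bal h, seval_prefix h⟩

lemma seval_strOf (s : List U) : SEval Q0 Δ γ (strOf s) s := by
  induction s with
  | nil => exact SEval.nil
  | cons a s ih => exact SEval.ltr ih

end Aux2


section Aux3

variable {U : Type}

/-- trichotomy for locating a replaced block relative to a `c`-split -/
lemma tri {α : Type} {l₂ B r x w : List α} {c : α} (h : l₂ ++ (B ++ r) = x ++ c :: w) :
    (∃ r₂, x = l₂ ++ B ++ r₂ ∧ r = r₂ ++ c :: w) ∨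
    (∃ l₃, l₂ = x ++ c :: l₃ ∧ w = l₃ ++ B ++ r) ∨
    (∃ p q, B = p ++ c :: q ∧ x = l₂ ++ p ∧ w = q ++ r) := by
  rcases List.append_eq_append_iff.1 h with ⟨a', ha, h2⟩ | ⟨c', hc, h2⟩
  · rcases List.append_eq_append_iff.1 h2 with ⟨b', hb, h3⟩ | ⟨d', hd, h3⟩
    · exact Or.inl ⟨b', by simp [ha, hb], h3⟩
    · rcases d' with _ | ⟨d0, d'⟩
      · simp at hd h3
        exact Or.inl ⟨[], by simp [ha, hd], by simp [h3]⟩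
      · injection h3 with h4 h5
        subst h4
        exact Or.inr (Or.inr ⟨a', d', by simp [hd], ha, h5⟩)
  · rcases c' with _ | ⟨c0, c'⟩
    · simp at hc h2
      rcases B with _ | ⟨b0, B⟩
      · exact Or.inl ⟨[], by simp [hc], by simpa using h2.symm⟩
      · injection h2 with h4 h5
        subst h4
        exact Or.inr (Or.inr ⟨[], B, by simp, by simp [hc], h5⟩)
    · injection h2 with h4 h5
      subst h4
      exact Or.inr (Or.inl ⟨c', hc, by simpa using h5⟩)

/-- five-way split for locating a length-2 pattern in a three-part string -/
lemma split5 {α : Type} {l m r p q : List α} {c₁ c₂ : α}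
    (h : l ++ (m ++ r) = p ++ c₁ :: c₂ :: q) :
    (∃ t, l = p ++ c₁ :: c₂ :: t) ∨
    (l = p ++ [c₁] ∧ m ++ r = c₂ :: q) ∨
    (∃ t u, m = t ++ c₁ :: c₂ :: u ∧ p = l ++ t) ∨
    (∃ t, m = t ++ [c₁] ∧ r = c₂ :: q ∧ p = l ++ t) ∨
    (∃ t, p = l ++ m ++ t ∧ r = t ++ c₁ :: c₂ :: q) := by
  rcases List.append_eq_append_iff.1 h with ⟨a', ha, h2⟩ | ⟨c', hc, h2⟩
  · rcases List.append_eq_append_iff.1 h2 with ⟨b', hb, h3⟩ | ⟨d', hd, h3⟩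
    · exact Or.inr (Or.inr (Or.inr (Or.inr ⟨b', by simp [ha, hb], h3⟩)))
    · rcases d' with _ | ⟨d0, d'⟩
      · simp at hd h3
        exact Or.inr (Or.inr (Or.inr (Or.inr ⟨[], by simp [ha, hd], by simp [h3.symm]⟩)))
      · injection h3 with h4 h5
        subst h4
        rcases d' with _ | ⟨d1, d'⟩
        · simp at h5
          exact Or.inr (Or.inr (Or.inr (Or.inl ⟨a', by simpa using hd, h5.symm, ha⟩)))
        · injection h5 with h6 h7
          subst h6
          exact Or.inr (Or.inr (Or.inl ⟨a', d', by simpa using hd, ha⟩))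
  · rcases c' with _ | ⟨c0, c'⟩
    · simp at hc h2
      rcases m with _ | ⟨m0, m⟩
      · simp at h2
        exact Or.inr (Or.inr (Or.inr (Or.inr ⟨[], by simp [hc], by simp [h2.symm]⟩)))
      · injection h2.symm with h4 h5
        subst h4
        rcases m with _ | ⟨m1, m⟩
        · simp at h5
          exact Or.inr (Or.inr (Or.inr (Or.inl ⟨[], by simp, h5, by simp [hc]⟩)))
        · injection h5 with h6 h7
          subst h6
          exact Or.inr (Or.inr (Or.inl ⟨[], m, by simp, by simp [hc]⟩))
    · injection h2 with h4 h5
      subst h4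
      rcases c' with _ | ⟨c1, c'⟩
      · simp at h5
        exact Or.inr (Or.inl ⟨by simpa using hc, h5.symm⟩)
      · injection h5 with h6 h7
        subst h6
        exact Or.inl ⟨c', by simpa using hc⟩

/-- splitting `strOf s ++ [cl]` at a `cl` -/
lemma strOf_snoc_cl {s : List U} {y z : List (TSym U)}
    (h : strOf s ++ [TSym.cl] = y ++ TSym.cl :: z) : y = strOf s ∧ z = [] := by
  rcases List.append_eq_append_iff.1 h with ⟨a', ha, h2⟩ | ⟨c', hc, h2⟩
  · rcases a' with _ | ⟨a0, a'⟩
    · simp at ha h2; exact ⟨ha, by simp [h2.symm]⟩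
    · injection h2 with h3 h4
      simp at h4
  · rcases c' with _ | ⟨c0, c'⟩
    · simp at hc h2; exact ⟨hc.symm, by simp [h2.symm]⟩
    · injection h2 with h3 h4
      subst h3
      exact absurd (hc ▸ List.mem_append_right y List.mem_cons_self)
        (cl_not_mem_strOf s)

/-- no occurrence of `⟩/` -/
def NoCS (u : List (TSym U)) : Prop :=
  ∀ p q : List (TSym U), u ≠ p ++ TSym.cl :: TSym.slash :: q

lemma nocs_of_no_slash {u : List (TSym U)} (h : TSym.slash ∉ u) : NoCS u := by
  intro p q hpq
  exact h (hpq ▸ List.mem_append_right p (List.mem_cons_of_mem _ List.mem_cons_self))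

lemma nocs_sub {a m b : List (TSym U)} (h : NoCS (a ++ m ++ b)) : NoCS m := by
  intro p q hpq
  exact h (a ++ p) (q ++ b) (by simp [hpq])

lemma block_no_cs {a : U} {s : List U} {t u' : List (TSym U)}
    (h : TSym.op :: TSym.ltr a :: TSym.slash :: (strOf s ++ [TSym.cl]) =
      t ++ TSym.cl :: TSym.slash :: u') : False := by
  rcases t with _ | ⟨t0, t⟩
  · simp at h
  injection h with h1 h2
  subst h1
  rcases t with _ | ⟨t0, t⟩
  · simp at h2
  injection h2 with h1 h2
  subst h1
  rcases t with _ | ⟨t0, t⟩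
  · simp at h2
  injection h2 with h1 h2
  subst h1
  obtain ⟨-, h⟩ := strOf_snoc_cl (by simpa using h2)
  simp at h

lemma nocs_step {Q0 : Set U} {Δ : Set (U × U × U)} {γ : U → Set U}
    {u v : List (TSym U)} (hns : NoCS u) (hm : GMove Q0 Δ γ u v) : NoCS v := by
  cases hm with
  | @init l r s a ha =>
    intro p q hpq
    have hpq' : l ++ ((TSym.op :: TSym.ltr a :: TSym.slash :: (strOf s ++ [TSym.cl])) ++ r)
        = p ++ TSym.cl :: TSym.slash :: q := by simpa [List.append_assoc] using hpq
    rcases split5 hpq' with ⟨t, hl⟩ | ⟨hl, h2⟩ | ⟨t, u', hB, -⟩ | ⟨t, hB, hr, -⟩ | ⟨t, hp, hr⟩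
    · exact hns p (t ++ ([TSym.op] ++ strOf s ++ [TSym.cl]) ++ r) (by simp [hl])
    · simp at h2
    · exact block_no_cs hB
    · refine hns (l ++ (TSym.op :: strOf s)) q ?_
      simp [hr]
    · exact hns (l ++ ([TSym.op] ++ strOf s ++ [TSym.cl]) ++ t) q (by simp [hr])
  | @horiz l r s a b c hab =>
    intro p q hpq
    have hpq' : l ++ ((TSym.op :: TSym.ltr c :: TSym.slash :: (strOf s ++ [TSym.cl])) ++ r)
        = p ++ TSym.cl :: TSym.slash :: q := by simpa [List.append_assoc] using hpq
    rcases split5 hpq' with ⟨t, hl⟩ | ⟨hl, h2⟩ | ⟨t, u', hB, -⟩ | ⟨t, hB, hr, -⟩ | ⟨t, hp, hr⟩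
    · exact hns p (t ++ ([TSym.op, TSym.ltr a, TSym.slash, TSym.ltr b] ++ strOf s ++ [TSym.cl]) ++ r)
        (by simp [hl])
    · simp at h2
    · exact block_no_cs hB
    · refine hns (l ++ (TSym.op :: TSym.ltr a :: TSym.slash :: TSym.ltr b :: strOf s)) q ?_
      simp [hr]
    · exact hns (l ++ ([TSym.op, TSym.ltr a, TSym.slash, TSym.ltr b] ++ strOf s ++ [TSym.cl]) ++ t) q
        (by simp [hr])
  | @vert l r a b hb =>
    intro p q hpq
    have hpq' : l ++ ([TSym.ltr b] ++ r) = p ++ TSym.cl :: TSym.slash :: q := by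
      simpa [List.append_assoc] using hpq
    rcases split5 hpq' with ⟨t, hl⟩ | ⟨hl, h2⟩ | ⟨t, u', hB, -⟩ | ⟨t, hB, hr, -⟩ | ⟨t, hp, hr⟩
    · exact hns p (t ++ [TSym.op, TSym.ltr a, TSym.slash, TSym.cl] ++ r) (by simp [hl])
    · simp at h2
    · rcases t with _ | ⟨t0, t⟩ <;> simp at hB
    · rcases t with _ | ⟨t0, t⟩ <;> simp at hB
    · exact hns (l ++ [TSym.op, TSym.ltr a, TSym.slash, TSym.cl] ++ t) q (by simp [hr])

end Aux3


section Aux4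

variable {U : Type} {Q0 : Set U} {Δ : Set (U × U × U)} {γ : U → Set U}

lemma relPow_tail {α : Type} {r : α → α → Prop} {n : ℕ} {a b c : α}
    (h : relPow r n a b) (hbc : r b c) : relPow r (n + 1) a c := by
  induction n generalizing a with
  | zero =>
    have h' : a = b := h
    subst h'
    exact ⟨c, hbc, rfl⟩
  | succ n ih =>
    obtain ⟨d, had, hd⟩ := (h : ∃ d, r a d ∧ relPow r n d b)
    exact ⟨d, had, ih hd⟩

lemma relPow_iff_rtg {α : Type} {r : α → α → Prop} {a b : α} :
    (∃ n, relPow r n a b) ↔ Relation.ReflTransGen r a b := by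
  constructor
  · rintro ⟨n, h⟩
    induction n generalizing a with
    | zero => exact (show a = b from h) ▸ Relation.ReflTransGen.refl
    | succ n ih =>
      obtain ⟨c, hac, hc⟩ := (h : ∃ c, r a c ∧ relPow r n c b)
      exact Relation.ReflTransGen.head hac (ih hc)
  · intro h
    induction h with
    | refl => exact ⟨0, rfl⟩
    | tail _ hbc ih => obtain ⟨n, hn⟩ := ih; exact ⟨n + 1, relPow_tail hn hbc⟩

lemma horiz_moves {a q : U} {s : List U} (h : Horiz Δ a s q) (l r : List (TSym U)) :
    Relation.ReflTransGen (GMove Q0 Δ γ)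
      (l ++ [TSym.op, TSym.ltr a, TSym.slash] ++ strOf s ++ [TSym.cl] ++ r)
      (l ++ [TSym.op, TSym.ltr q, TSym.slash] ++ [TSym.cl] ++ r) := by
  induction h generalizing l with
  | nil a => simpa [strOf] using Relation.ReflTransGen.refl
  | @cons a b c q s hΔ _ ih =>
    refine Relation.ReflTransGen.head ?_ (by simpa using ih l)
    have := GMove.horiz (Q0 := Q0) (γ := γ) (l := l) (r := r) (s := s) hΔ
    simpa [strOf, List.append_assoc] using this

lemma seval_moves {x : List (TSym U)} {s : List U} (h : SEval Q0 Δ γ x s) :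
    ∀ l r : List (TSym U),
      Relation.ReflTransGen (GMove Q0 Δ γ) (l ++ x ++ r) (l ++ strOf s ++ r) := by
  induction h with
  | nil => intro l r; simpa [strOf] using Relation.ReflTransGen.refl
  | @ltr a w s _ ih =>
    intro l r
    have := ih (l ++ [TSym.ltr a]) r
    simpa [strOf, List.append_assoc] using this
  | @tree a q b x w s₁ s ha _ hH hb _ ihx ihw =>
    intro l r
    have h1 := ihx (l ++ [TSym.op]) ([TSym.cl] ++ w ++ r)
    have h2 : GMove Q0 Δ γ (l ++ [TSym.op] ++ strOf s₁ ++ [TSym.cl] ++ (w ++ r))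
        (l ++ [TSym.op, TSym.ltr a, TSym.slash] ++ strOf s₁ ++ [TSym.cl] ++ (w ++ r)) :=
      GMove.init ha
    have h3 := horiz_moves (Q0 := Q0) (γ := γ) hH l (w ++ r)
    have h4 : GMove Q0 Δ γ (l ++ [TSym.op, TSym.ltr q, TSym.slash, TSym.cl] ++ (w ++ r))
        (l ++ [TSym.ltr b] ++ (w ++ r)) := GMove.vert hb
    have h5 := ihw (l ++ [TSym.ltr b]) r
    refine Relation.ReflTransGen.trans (by simpa [List.append_assoc] using h1) ?_
    refine Relation.ReflTransGen.head (by simpa [List.append_assoc] using h2) ?_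
    refine Relation.ReflTransGen.trans (by simpa [List.append_assoc] using h3) ?_
    refine Relation.ReflTransGen.head (by simpa [List.append_assoc] using h4) ?_
    simpa [strOf, List.append_assoc] using h5
  | @ptree a q b x w s₁ s _ hH hb _ ihx ihw =>
    intro l r
    have h1 := ihx (l ++ [TSym.op, TSym.ltr a, TSym.slash]) ([TSym.cl] ++ w ++ r)
    have h3 := horiz_moves (Q0 := Q0) (γ := γ) hH l (w ++ r)
    have h4 : GMove Q0 Δ γ (l ++ [TSym.op, TSym.ltr q, TSym.slash, TSym.cl] ++ (w ++ r))
        (l ++ [TSym.ltr b] ++ (w ++ r)) := GMove.vert hb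
    have h5 := ihw (l ++ [TSym.ltr b]) r
    refine Relation.ReflTransGen.trans (by simpa [List.append_assoc] using h1) ?_
    refine Relation.ReflTransGen.trans (by simpa [List.append_assoc] using h3) ?_
    refine Relation.ReflTransGen.head (by simpa [List.append_assoc] using h4) ?_
    simpa [strOf, List.append_assoc] using h5

end Aux4


section Aux5

variable {U : Type} {Q0 : Set U} {Δ : Set (U × U × U)} {γ : U → Set U}

lemma nocs_of_eq {u a m b : List (TSym U)} (h : NoCS u) (he : u = a ++ m ++ b) : NoCS m :=
  nocs_sub (he ▸ h)

lemma gmove_cases {u v : List (TSym U)} (hm : GMove Q0 Δ γ u v) :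
    (∃ l r s a, a ∈ Q0 ∧ u = l ++ (TSym.op :: (strOf s ++ [TSym.cl])) ++ r ∧
        v = l ++ (TSym.op :: TSym.ltr a :: TSym.slash :: (strOf s ++ [TSym.cl])) ++ r) ∨
    (∃ l r s a b c, (a, b, c) ∈ Δ ∧
        u = l ++ (TSym.op :: TSym.ltr a :: TSym.slash :: TSym.ltr b :: (strOf s ++ [TSym.cl])) ++ r ∧
        v = l ++ (TSym.op :: TSym.ltr c :: TSym.slash :: (strOf s ++ [TSym.cl])) ++ r) ∨
    (∃ l r a b, b ∈ γ a ∧ u = l ++ [TSym.op, TSym.ltr a, TSym.slash, TSym.cl] ++ r ∧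
        v = l ++ [TSym.ltr b] ++ r) := by
  cases hm with
  | @init l r s a ha => exact Or.inl ⟨l, r, s, a, ha, by simp, by simp⟩
  | @horiz l r s a b c h => exact Or.inr (Or.inl ⟨l, r, s, a, b, c, h, by simp, by simp⟩)
  | @vert l r a b h => exact Or.inr (Or.inr ⟨l, r, a, b, h, by simp, by simp⟩)

end Aux5


section Aux6

variable {U : Type} {Q0 : Set U} {Δ : Set (U × U × U)} {γ : U → Set U}

lemma seval_back {v : List (TSym U)} {s : List U} (h : SEval Q0 Δ γ v s) :
    ∀ {u : List (TSym U)}, NoCS u → GMove Q0 Δ γ u v → SEval Q0 Δ γ u s := by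
  induction h with
  | nil =>
    intro u hns hm
    rcases gmove_cases hm with ⟨l, r, s0, a0, ha, hu, hv⟩ | ⟨l, r, s0, a0, b0, c0, hΔ, hu, hv⟩ |
      ⟨l, r, a0, b0, hb0, hu, hv⟩ <;> simp [List.append_eq_nil_iff] at hv
  | @ltr a w s hw ih =>
    intro u hns hm
    rcases gmove_cases hm with ⟨l, r, s0, a0, ha, hu, hv⟩ | ⟨l, r, s0, a0, b0, c0, hΔ, hu, hv⟩ |
      ⟨l, r, a0, b0, hb0, hu, hv⟩
    · -- init
      rcases l with _ | ⟨c1, l₂⟩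
      · simp at hv
      · simp only [List.cons_append, List.append_assoc] at hv
        injection hv with h1 h2
        subst h1; subst hu
        have hg : GMove Q0 Δ γ (l₂ ++ ((TSym.op :: (strOf s0 ++ [TSym.cl])) ++ r)) w := by
          rw [h2]
          simpa [List.append_assoc] using GMove.init (l := l₂) (r := r) (s := s0)
            (Q0 := Q0) (Δ := Δ) (γ := γ) ha
        have hns2 : NoCS (l₂ ++ ((TSym.op :: (strOf s0 ++ [TSym.cl])) ++ r)) :=
          nocs_of_eq (a := [TSym.ltr a]) (b := []) hns (by simp)
        have := SEval.ltr (a := a) (ih hns2 hg)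
        simpa [List.append_assoc] using this
    · -- horiz
      rcases l with _ | ⟨c1, l₂⟩
      · simp at hv
      · simp only [List.cons_append, List.append_assoc] at hv
        injection hv with h1 h2
        subst h1; subst hu
        have hg : GMove Q0 Δ γ
            (l₂ ++ ((TSym.op :: TSym.ltr a0 :: TSym.slash :: TSym.ltr b0 :: (strOf s0 ++ [TSym.cl])) ++ r))
            w := by
          rw [h2]
          simpa [List.append_assoc] using GMove.horiz (l := l₂) (r := r) (s := s0)
            (Q0 := Q0) (γ := γ) hΔ
        have hns2 : NoCS (l₂ ++ ((TSym.op :: TSym.ltr a0 :: TSym.slash :: TSym.ltr b0 :: (strOf s0 ++ [TSym.cl])) ++ r)) :=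
          nocs_of_eq (a := [TSym.ltr a]) (b := []) hns (by simp)
        have := SEval.ltr (a := a) (ih hns2 hg)
        simpa [List.append_assoc] using this
    · -- vert
      rcases l with _ | ⟨c1, l₂⟩
      · simp only [List.nil_append, List.cons_append] at hv
        injection hv with h1 h2
        obtain rfl : b0 = a := by injection h1 with h1'; exact h1'.symm
        subst h2; subst hu
        have := SEval.ptree (a := a0) (SEval.nil) (Horiz.nil a0) hb0 hw
        simpa using this
      · simp only [List.cons_append, List.append_assoc] at hv
        injection hv with h1 h2
        subst h1; subst hu
        have hg : GMove Q0 Δ γ (l₂ ++ ([TSym.op, TSym.ltr a0, TSym.slash, TSym.cl] ++ r))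
            w := by
          rw [h2]
          simpa [List.append_assoc] using GMove.vert (l := l₂) (r := r)
            (Q0 := Q0) (Δ := Δ) hb0
        have hns2 : NoCS (l₂ ++ ([TSym.op, TSym.ltr a0, TSym.slash, TSym.cl] ++ r)) :=
          nocs_of_eq (a := [TSym.ltr a]) (b := []) hns (by simp)
        have := SEval.ltr (a := a) (ih hns2 hg)
        simpa [List.append_assoc] using this
  | @tree a q b x w s₁ s ha hx hH hb hw ihx ihw =>
    intro u hns hm
    rcases gmove_cases hm with ⟨l, r, s0, a0, ha0, hu, hv⟩ | ⟨l, r, s0, a0, b0, c0, hΔ, hu, hv⟩ |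
      ⟨l, r, a0, b0, hb0, hu, hv⟩
    · -- init
      rcases l with _ | ⟨c1, l₂⟩
      · -- impossible: x would start with ltr, slash
        simp only [List.nil_append, List.cons_append, List.append_assoc] at hv
        injection hv with h1 h2
        rcases x with _ | ⟨x0, x⟩
        · simp at h2
        simp only [List.cons_append] at h2
        injection h2 with h3 h4
        rcases x with _ | ⟨x1, x⟩
        · simp at h4
        simp only [List.cons_append] at h4
        injection h4 with h5 h6
        subst h3; subst h5
        cases hx with
        | ltr hx2 => cases hx2
      · simp only [List.cons_append, List.append_assoc] at hv
        injection hv with h1 h2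
        subst h1; subst hu
        have h2' : l₂ ++ ((TSym.op :: TSym.ltr a0 :: TSym.slash :: (strOf s0 ++ [TSym.cl])) ++ r) = x ++ TSym.cl :: w := by
          simpa [List.append_assoc] using h2.symm
        rcases tri h2' with ⟨r₂, hx2, hr⟩ | ⟨l₃, hl₂, hw2⟩ | ⟨p, qq, hBp, hxp, hwp⟩
        · -- move inside x
          subst hr
          have hg : GMove Q0 Δ γ (l₂ ++ ((TSym.op :: (strOf s0 ++ [TSym.cl])) ++ r₂)) x := by
            rw [hx2]
            simpa [List.append_assoc] using GMove.init (l := l₂) (r := r₂) (s := s0)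
              (Q0 := Q0) (Δ := Δ) (γ := γ) ha0
          have hns2 : NoCS (l₂ ++ ((TSym.op :: (strOf s0 ++ [TSym.cl])) ++ r₂)) :=
            nocs_of_eq (a := [TSym.op]) (b := TSym.cl :: w) hns (by simp)
          have := SEval.tree ha (ihx hns2 hg) hH hb hw
          simpa [List.append_assoc] using this
        · -- move inside w
          subst hl₂
          have hg : GMove Q0 Δ γ (l₃ ++ ((TSym.op :: (strOf s0 ++ [TSym.cl])) ++ r)) w := by
            rw [hw2]
            simpa [List.append_assoc] using GMove.init (l := l₃) (r := r) (s := s0)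
              (Q0 := Q0) (Δ := Δ) (γ := γ) ha0
          have hns2 : NoCS (l₃ ++ ((TSym.op :: (strOf s0 ++ [TSym.cl])) ++ r)) :=
            nocs_of_eq (a := TSym.op :: (x ++ [TSym.cl])) (b := []) hns (by simp)
          have := SEval.tree ha hx hH hb (ihw hns2 hg)
          simpa [List.append_assoc] using this
        · -- straddle: impossible by balance
          exfalso
          rcases p with _ | ⟨p0, p⟩
          · simp at hBp
          injection hBp with h3 h4
          rcases p with _ | ⟨p1, p⟩
          · simp at h4
          injection h4 with h5 h6
          rcases p with _ | ⟨p2, p⟩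
          · simp at h6
          injection h6 with h7 h8
          obtain ⟨hp, hqq⟩ := strOf_snoc_cl h8
          subst hp; subst h3; subst h5; subst h7
          have hb0 := seval_bal hx
          have hpre := seval_prefix hx l₂ _ hxp
          rw [hxp] at hb0
          simp at hb0
          omega
    · -- horiz
      rcases l with _ | ⟨c1, l₂⟩
      · simp only [List.nil_append, List.cons_append, List.append_assoc] at hv
        injection hv with h1 h2
        rcases x with _ | ⟨x0, x⟩
        · simp at h2
        simp only [List.cons_append] at h2
        injection h2 with h3 h4
        rcases x with _ | ⟨x1, x⟩
        · simp at h4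
        simp only [List.cons_append] at h4
        injection h4 with h5 h6
        subst h3; subst h5
        cases hx with
        | ltr hx2 => cases hx2
      · simp only [List.cons_append, List.append_assoc] at hv
        injection hv with h1 h2
        subst h1; subst hu
        have h2' : l₂ ++ ((TSym.op :: TSym.ltr c0 :: TSym.slash :: (strOf s0 ++ [TSym.cl])) ++ r) = x ++ TSym.cl :: w := by
          simpa [List.append_assoc] using h2.symm
        rcases tri h2' with ⟨r₂, hx2, hr⟩ | ⟨l₃, hl₂, hw2⟩ | ⟨p, qq, hBp, hxp, hwp⟩
        · subst hr
          have hg : GMove Q0 Δ γ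
              (l₂ ++ ((TSym.op :: TSym.ltr a0 :: TSym.slash :: TSym.ltr b0 :: (strOf s0 ++ [TSym.cl])) ++ r₂)) x := by
            rw [hx2]
            simpa [List.append_assoc] using GMove.horiz (l := l₂) (r := r₂) (s := s0)
              (Q0 := Q0) (γ := γ) hΔ
          have hns2 : NoCS (l₂ ++ ((TSym.op :: TSym.ltr a0 :: TSym.slash :: TSym.ltr b0 :: (strOf s0 ++ [TSym.cl])) ++ r₂)) :=
            nocs_of_eq (a := [TSym.op]) (b := TSym.cl :: w) hns (by simp)
          have := SEval.tree ha (ihx hns2 hg) hH hb hw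
          simpa [List.append_assoc] using this
        · subst hl₂
          have hg : GMove Q0 Δ γ
              (l₃ ++ ((TSym.op :: TSym.ltr a0 :: TSym.slash :: TSym.ltr b0 :: (strOf s0 ++ [TSym.cl])) ++ r)) w := by
            rw [hw2]
            simpa [List.append_assoc] using GMove.horiz (l := l₃) (r := r) (s := s0)
              (Q0 := Q0) (γ := γ) hΔ
          have hns2 : NoCS (l₃ ++ ((TSym.op :: TSym.ltr a0 :: TSym.slash :: TSym.ltr b0 :: (strOf s0 ++ [TSym.cl])) ++ r)) :=
            nocs_of_eq (a := TSym.op :: (x ++ [TSym.cl])) (b := []) hns (by simp)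
          have := SEval.tree ha hx hH hb (ihw hns2 hg)
          simpa [List.append_assoc] using this
        · exfalso
          rcases p with _ | ⟨p0, p⟩
          · simp at hBp
          injection hBp with h3 h4
          rcases p with _ | ⟨p1, p⟩
          · simp at h4
          injection h4 with h5 h6
          rcases p with _ | ⟨p2, p⟩
          · simp at h6
          injection h6 with h7 h8
          obtain ⟨hp, hqq⟩ := strOf_snoc_cl h8
          subst hp; subst h3; subst h5; subst h7
          have hb0 := seval_bal hx
          have hpre := seval_prefix hx l₂ _ hxp
          rw [hxp] at hb0
          simp at hb0
          omega
    · -- vert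
      rcases l with _ | ⟨c1, l₂⟩
      · simp at hv
      · simp only [List.cons_append, List.append_assoc] at hv
        injection hv with h1 h2
        subst h1; subst hu
        have h2' : l₂ ++ ([TSym.ltr b0] ++ r) = x ++ TSym.cl :: w := by
          simpa [List.append_assoc] using h2.symm
        rcases tri h2' with ⟨r₂, hx2, hr⟩ | ⟨l₃, hl₂, hw2⟩ | ⟨p, qq, hBp, hxp, hwp⟩
        · subst hr
          have hg : GMove Q0 Δ γ (l₂ ++ ([TSym.op, TSym.ltr a0, TSym.slash, TSym.cl] ++ r₂)) x := by
            rw [hx2]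
            simpa [List.append_assoc] using GMove.vert (l := l₂) (r := r₂)
              (Q0 := Q0) (Δ := Δ) hb0
          have hns2 : NoCS (l₂ ++ ([TSym.op, TSym.ltr a0, TSym.slash, TSym.cl] ++ r₂)) :=
            nocs_of_eq (a := [TSym.op]) (b := TSym.cl :: w) hns (by simp)
          have := SEval.tree ha (ihx hns2 hg) hH hb hw
          simpa [List.append_assoc] using this
        · subst hl₂
          have hg : GMove Q0 Δ γ (l₃ ++ ([TSym.op, TSym.ltr a0, TSym.slash, TSym.cl] ++ r)) w := by
            rw [hw2]
            simpa [List.append_assoc] using GMove.vert (l := l₃) (r := r)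
              (Q0 := Q0) (Δ := Δ) hb0
          have hns2 : NoCS (l₃ ++ ([TSym.op, TSym.ltr a0, TSym.slash, TSym.cl] ++ r)) :=
            nocs_of_eq (a := TSym.op :: (x ++ [TSym.cl])) (b := []) hns (by simp)
          have := SEval.tree ha hx hH hb (ihw hns2 hg)
          simpa [List.append_assoc] using this
        · exfalso
          rcases p with _ | ⟨p0, p⟩ <;> simp at hBp
  | @ptree a q b x w s₁ s hx hH hb hw ihx ihw =>
    intro u hns hm
    rcases gmove_cases hm with ⟨l, r, s0, a0, ha0, hu, hv⟩ | ⟨l, r, s0, a0, b0, c0, hΔ, hu, hv⟩ |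
      ⟨l, r, a0, b0, hb0, hu, hv⟩
    · -- init
      rcases l with _ | ⟨c1, l₂⟩
      · -- top-level init: rebuild as tree
        simp only [List.nil_append, List.cons_append, List.append_assoc] at hv
        injection hv with h1 h2
        injection h2 with h3 h4
        injection h4 with h5 h6
        obtain rfl : a = a0 := by injection h3
        have h6' : x ++ TSym.cl :: w = strOf s0 ++ TSym.cl :: r := by simpa using h6
        obtain ⟨hxs, hwr⟩ := bal0_uniq (seval_bal0 hx) (bal0_strOf s0) h6'
        subst hxs; subst hwr; subst hu
        have := SEval.tree ha0 hx hH hb hw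
        simpa [List.append_assoc] using this
      · simp only [List.cons_append, List.append_assoc] at hv
        injection hv with h1 h2
        subst h1; subst hu
        rcases l₂ with _ | ⟨c2, l₃⟩
        · simp at h2
        injection h2 with h3 h4
        subst h3
        rcases l₃ with _ | ⟨c3, l₄⟩
        · simp at h4
        injection h4 with h5 h6
        subst h5
        have h2' : l₄ ++ ((TSym.op :: TSym.ltr a0 :: TSym.slash :: (strOf s0 ++ [TSym.cl])) ++ r)
            = x ++ TSym.cl :: w := by simpa [List.append_assoc] using h6.symm
        rcases tri h2' with ⟨r₂, hx2, hr⟩ | ⟨l₃', hl₂, hw2⟩ | ⟨p, qq, hBp, hxp, hwp⟩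
        · subst hr
          have hg : GMove Q0 Δ γ (l₄ ++ ((TSym.op :: (strOf s0 ++ [TSym.cl])) ++ r₂)) x := by
            rw [hx2]
            simpa [List.append_assoc] using GMove.init (l := l₄) (r := r₂) (s := s0)
              (Q0 := Q0) (Δ := Δ) (γ := γ) ha0
          have hns2 : NoCS (l₄ ++ ((TSym.op :: (strOf s0 ++ [TSym.cl])) ++ r₂)) :=
            nocs_of_eq (a := [TSym.op, TSym.ltr a, TSym.slash]) (b := TSym.cl :: w) hns (by simp)
          have := SEval.ptree (ihx hns2 hg) hH hb hw
          simpa [List.append_assoc] using this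
        · subst hl₂
          have hg : GMove Q0 Δ γ (l₃' ++ ((TSym.op :: (strOf s0 ++ [TSym.cl])) ++ r)) w := by
            rw [hw2]
            simpa [List.append_assoc] using GMove.init (l := l₃') (r := r) (s := s0)
              (Q0 := Q0) (Δ := Δ) (γ := γ) ha0
          have hns2 : NoCS (l₃' ++ ((TSym.op :: (strOf s0 ++ [TSym.cl])) ++ r)) :=
            nocs_of_eq (a := TSym.op :: TSym.ltr a :: TSym.slash :: (x ++ [TSym.cl])) (b := []) hns (by simp)
          have := SEval.ptree hx hH hb (ihw hns2 hg)
          simpa [List.append_assoc] using this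
        · exfalso
          rcases p with _ | ⟨p0, p⟩
          · simp at hBp
          injection hBp with h3 h4
          rcases p with _ | ⟨p1, p⟩
          · simp at h4
          injection h4 with h5 h6'
          rcases p with _ | ⟨p2, p⟩
          · simp at h6'
          injection h6' with h7 h8
          obtain ⟨hp, hqq⟩ := strOf_snoc_cl h8
          subst hp; subst h3; subst h5; subst h7
          have hbal := seval_bal hx
          have hpre := seval_prefix hx l₄ _ hxp
          rw [hxp] at hbal
          simp at hbal
          omega
    · -- horiz
      rcases l with _ | ⟨c1, l₂⟩
      · -- top-level horiz: extend the letter string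
        simp only [List.nil_append, List.cons_append, List.append_assoc] at hv
        injection hv with h1 h2
        injection h2 with h3 h4
        injection h4 with h5 h6
        obtain rfl : a = c0 := by injection h3
        have h6' : x ++ TSym.cl :: w = strOf s0 ++ TSym.cl :: r := by simpa using h6
        obtain ⟨hxs, hwr⟩ := bal0_uniq (seval_bal0 hx) (bal0_strOf s0) h6'
        subst hxs; subst hwr; subst hu
        have := SEval.ptree (SEval.ltr (a := b0) hx) (Horiz.cons hΔ hH) hb hw
        simpa [List.append_assoc] using this
      · simp only [List.cons_append, List.append_assoc] at hv
        injection hv with h1 h2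
        subst h1; subst hu
        rcases l₂ with _ | ⟨c2, l₃⟩
        · simp at h2
        injection h2 with h3 h4
        subst h3
        rcases l₃ with _ | ⟨c3, l₄⟩
        · simp at h4
        injection h4 with h5 h6
        subst h5
        have h2' : l₄ ++ ((TSym.op :: TSym.ltr c0 :: TSym.slash :: (strOf s0 ++ [TSym.cl])) ++ r)
            = x ++ TSym.cl :: w := by simpa [List.append_assoc] using h6.symm
        rcases tri h2' with ⟨r₂, hx2, hr⟩ | ⟨l₃', hl₂, hw2⟩ | ⟨p, qq, hBp, hxp, hwp⟩
        · subst hr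
          have hg : GMove Q0 Δ γ
              (l₄ ++ ((TSym.op :: TSym.ltr a0 :: TSym.slash :: TSym.ltr b0 :: (strOf s0 ++ [TSym.cl])) ++ r₂)) x := by
            rw [hx2]
            simpa [List.append_assoc] using GMove.horiz (l := l₄) (r := r₂) (s := s0)
              (Q0 := Q0) (γ := γ) hΔ
          have hns2 : NoCS (l₄ ++ ((TSym.op :: TSym.ltr a0 :: TSym.slash :: TSym.ltr b0 :: (strOf s0 ++ [TSym.cl])) ++ r₂)) :=
            nocs_of_eq (a := [TSym.op, TSym.ltr a, TSym.slash]) (b := TSym.cl :: w) hns (by simp)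
          have := SEval.ptree (ihx hns2 hg) hH hb hw
          simpa [List.append_assoc] using this
        · subst hl₂
          have hg : GMove Q0 Δ γ
              (l₃' ++ ((TSym.op :: TSym.ltr a0 :: TSym.slash :: TSym.ltr b0 :: (strOf s0 ++ [TSym.cl])) ++ r)) w := by
            rw [hw2]
            simpa [List.append_assoc] using GMove.horiz (l := l₃') (r := r) (s := s0)
              (Q0 := Q0) (γ := γ) hΔ
          have hns2 : NoCS (l₃' ++ ((TSym.op :: TSym.ltr a0 :: TSym.slash :: TSym.ltr b0 :: (strOf s0 ++ [TSym.cl])) ++ r)) :=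
            nocs_of_eq (a := TSym.op :: TSym.ltr a :: TSym.slash :: (x ++ [TSym.cl])) (b := []) hns (by simp)
          have := SEval.ptree hx hH hb (ihw hns2 hg)
          simpa [List.append_assoc] using this
        · exfalso
          rcases p with _ | ⟨p0, p⟩
          · simp at hBp
          injection hBp with h3 h4
          rcases p with _ | ⟨p1, p⟩
          · simp at h4
          injection h4 with h5 h6'
          rcases p with _ | ⟨p2, p⟩
          · simp at h6'
          injection h6' with h7 h8
          obtain ⟨hp, hqq⟩ := strOf_snoc_cl h8
          subst hp; subst h3; subst h5; subst h7
          have hbal := seval_bal hx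
          have hpre := seval_prefix hx l₄ _ hxp
          rw [hxp] at hbal
          simp at hbal
          omega
    · -- vert
      rcases l with _ | ⟨c1, l₂⟩
      · simp at hv
      · simp only [List.cons_append, List.append_assoc] at hv
        injection hv with h1 h2
        subst h1; subst hu
        rcases l₂ with _ | ⟨c2, l₃⟩
        · -- the nasty case: excluded by NoCS
          exfalso
          simp only [List.nil_append] at h2
          injection h2 with h3 h4
          exact hns [TSym.op, TSym.op, TSym.ltr a0, TSym.slash] (x ++ TSym.cl :: w)
            (by simp [h4.symm])
        injection h2 with h3 h4
        subst h3
        rcases l₃ with _ | ⟨c3, l₄⟩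
        · simp at h4
        injection h4 with h5 h6
        subst h5
        have h2' : l₄ ++ ([TSym.ltr b0] ++ r) = x ++ TSym.cl :: w := by
          simpa [List.append_assoc] using h6.symm
        rcases tri h2' with ⟨r₂, hx2, hr⟩ | ⟨l₃', hl₂, hw2⟩ | ⟨p, qq, hBp, hxp, hwp⟩
        · subst hr
          have hg : GMove Q0 Δ γ (l₄ ++ ([TSym.op, TSym.ltr a0, TSym.slash, TSym.cl] ++ r₂)) x := by
            rw [hx2]
            simpa [List.append_assoc] using GMove.vert (l := l₄) (r := r₂)
              (Q0 := Q0) (Δ := Δ) hb0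
          have hns2 : NoCS (l₄ ++ ([TSym.op, TSym.ltr a0, TSym.slash, TSym.cl] ++ r₂)) :=
            nocs_of_eq (a := [TSym.op, TSym.ltr a, TSym.slash]) (b := TSym.cl :: w) hns (by simp)
          have := SEval.ptree (ihx hns2 hg) hH hb hw
          simpa [List.append_assoc] using this
        · subst hl₂
          have hg : GMove Q0 Δ γ (l₃' ++ ([TSym.op, TSym.ltr a0, TSym.slash, TSym.cl] ++ r)) w := by
            rw [hw2]
            simpa [List.append_assoc] using GMove.vert (l := l₃') (r := r)
              (Q0 := Q0) (Δ := Δ) hb0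
          have hns2 : NoCS (l₃' ++ ([TSym.op, TSym.ltr a0, TSym.slash, TSym.cl] ++ r)) :=
            nocs_of_eq (a := TSym.op :: TSym.ltr a :: TSym.slash :: (x ++ [TSym.cl])) (b := []) hns (by simp)
          have := SEval.ptree hx hH hb (ihw hns2 hg)
          simpa [List.append_assoc] using this
        · exfalso
          rcases p with _ | ⟨p0, p⟩ <;> simp at hBp

end Aux6


section Aux7

variable {U : Type} {Q0 : Set U} {Δ : Set (U × U × U)} {γ : U → Set U}

/-- big-step evaluation to a final tree -/
inductive FEval (Q0 : Set U) (Δ : Set (U × U × U)) (γ : U → Set U) :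
    List (TSym U) → U → Prop where
  | tree {a q : U} {x : List (TSym U)} {s : List U} :
      a ∈ Q0 → SEval Q0 Δ γ x s → Horiz Δ a s q →
      FEval Q0 Δ γ (TSym.op :: (x ++ [TSym.cl])) q
  | ptree {a q : U} {x : List (TSym U)} {s : List U} :
      SEval Q0 Δ γ x s → Horiz Δ a s q →
      FEval Q0 Δ γ (TSym.op :: TSym.ltr a :: TSym.slash :: (x ++ [TSym.cl])) q

lemma fev_back {u v : List (TSym U)} {q : U} (hns : NoCS u) (hm : GMove Q0 Δ γ u v)
    (hf : FEval Q0 Δ γ v q) : FEval Q0 Δ γ u q := by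
  cases hf with
  | @tree a q x s ha hx hH =>
    rcases gmove_cases hm with ⟨l, r, s0, a0, ha0, hu, hv⟩ | ⟨l, r, s0, a0, b0, c0, hΔ, hu, hv⟩ |
      ⟨l, r, a0, b0, hb0, hu, hv⟩
    · -- init
      rcases l with _ | ⟨c1, l₂⟩
      · simp only [List.nil_append, List.cons_append, List.append_assoc] at hv
        injection hv with h1 h2
        rcases x with _ | ⟨x0, x⟩
        · simp at h2
        simp only [List.cons_append] at h2
        injection h2 with h3 h4
        rcases x with _ | ⟨x1, x⟩
        · simp at h4
        simp only [List.cons_append] at h4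
        injection h4 with h5 h6
        subst h3; subst h5
        cases hx with
        | ltr hx2 => cases hx2
      · simp only [List.cons_append, List.append_assoc] at hv
        injection hv with h1 h2
        subst h1; subst hu
        have h2' : l₂ ++ ((TSym.op :: TSym.ltr a0 :: TSym.slash :: (strOf s0 ++ [TSym.cl])) ++ r)
            = x ++ TSym.cl :: ([] : List (TSym U)) := by simpa [List.append_assoc] using h2.symm
        rcases tri h2' with ⟨r₂, hx2, hr⟩ | ⟨l₃', hl₂, hw2⟩ | ⟨p, qq, hBp, hxp, hwp⟩
        · subst hr
          have hg : GMove Q0 Δ γ (l₂ ++ ((TSym.op :: (strOf s0 ++ [TSym.cl])) ++ r₂)) x := by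
            rw [hx2]
            simpa [List.append_assoc] using GMove.init (l := l₂) (r := r₂) (s := s0)
              (Q0 := Q0) (Δ := Δ) (γ := γ) ha0
          have hns2 : NoCS (l₂ ++ ((TSym.op :: (strOf s0 ++ [TSym.cl])) ++ r₂)) :=
            nocs_of_eq (a := [TSym.op]) (b := [TSym.cl]) hns (by simp)
          have := FEval.tree ha (seval_back hx hns2 hg) hH
          simpa [List.append_assoc] using this
        · simp at hw2
        · exfalso
          rcases p with _ | ⟨p0, p⟩
          · simp at hBp
          injection hBp with h3 h4
          rcases p with _ | ⟨p1, p⟩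
          · simp at h4
          injection h4 with h5 h6'
          rcases p with _ | ⟨p2, p⟩
          · simp at h6'
          injection h6' with h7 h8
          obtain ⟨hp, hqq⟩ := strOf_snoc_cl h8
          subst hp; subst h3; subst h5; subst h7
          have hbal := seval_bal hx
          have hpre := seval_prefix hx l₂ _ hxp
          rw [hxp] at hbal
          simp at hbal
          omega
    · -- horiz
      rcases l with _ | ⟨c1, l₂⟩
      · simp only [List.nil_append, List.cons_append, List.append_assoc] at hv
        injection hv with h1 h2
        rcases x with _ | ⟨x0, x⟩
        · simp at h2
        simp only [List.cons_append] at h2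
        injection h2 with h3 h4
        rcases x with _ | ⟨x1, x⟩
        · simp at h4
        simp only [List.cons_append] at h4
        injection h4 with h5 h6
        subst h3; subst h5
        cases hx with
        | ltr hx2 => cases hx2
      · simp only [List.cons_append, List.append_assoc] at hv
        injection hv with h1 h2
        subst h1; subst hu
        have h2' : l₂ ++ ((TSym.op :: TSym.ltr c0 :: TSym.slash :: (strOf s0 ++ [TSym.cl])) ++ r)
            = x ++ TSym.cl :: ([] : List (TSym U)) := by simpa [List.append_assoc] using h2.symm
        rcases tri h2' with ⟨r₂, hx2, hr⟩ | ⟨l₃', hl₂, hw2⟩ | ⟨p, qq, hBp, hxp, hwp⟩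
        · subst hr
          have hg : GMove Q0 Δ γ
              (l₂ ++ ((TSym.op :: TSym.ltr a0 :: TSym.slash :: TSym.ltr b0 :: (strOf s0 ++ [TSym.cl])) ++ r₂)) x := by
            rw [hx2]
            simpa [List.append_assoc] using GMove.horiz (l := l₂) (r := r₂) (s := s0)
              (Q0 := Q0) (γ := γ) hΔ
          have hns2 : NoCS (l₂ ++ ((TSym.op :: TSym.ltr a0 :: TSym.slash :: TSym.ltr b0 :: (strOf s0 ++ [TSym.cl])) ++ r₂)) :=
            nocs_of_eq (a := [TSym.op]) (b := [TSym.cl]) hns (by simp)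
          have := FEval.tree ha (seval_back hx hns2 hg) hH
          simpa [List.append_assoc] using this
        · simp at hw2
        · exfalso
          rcases p with _ | ⟨p0, p⟩
          · simp at hBp
          injection hBp with h3 h4
          rcases p with _ | ⟨p1, p⟩
          · simp at h4
          injection h4 with h5 h6'
          rcases p with _ | ⟨p2, p⟩
          · simp at h6'
          injection h6' with h7 h8
          obtain ⟨hp, hqq⟩ := strOf_snoc_cl h8
          subst hp; subst h3; subst h5; subst h7
          have hbal := seval_bal hx
          have hpre := seval_prefix hx l₂ _ hxp
          rw [hxp] at hbal
          simp at hbal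
          omega
    · -- vert
      rcases l with _ | ⟨c1, l₂⟩
      · simp at hv
      · simp only [List.cons_append, List.append_assoc] at hv
        injection hv with h1 h2
        subst h1; subst hu
        have h2' : l₂ ++ ([TSym.ltr b0] ++ r) = x ++ TSym.cl :: ([] : List (TSym U)) := by
          simpa [List.append_assoc] using h2.symm
        rcases tri h2' with ⟨r₂, hx2, hr⟩ | ⟨l₃', hl₂, hw2⟩ | ⟨p, qq, hBp, hxp, hwp⟩
        · subst hr
          have hg : GMove Q0 Δ γ (l₂ ++ ([TSym.op, TSym.ltr a0, TSym.slash, TSym.cl] ++ r₂)) x := by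
            rw [hx2]
            simpa [List.append_assoc] using GMove.vert (l := l₂) (r := r₂)
              (Q0 := Q0) (Δ := Δ) hb0
          have hns2 : NoCS (l₂ ++ ([TSym.op, TSym.ltr a0, TSym.slash, TSym.cl] ++ r₂)) :=
            nocs_of_eq (a := [TSym.op]) (b := [TSym.cl]) hns (by simp)
          have := FEval.tree ha (seval_back hx hns2 hg) hH
          simpa [List.append_assoc] using this
        · simp at hw2
        · exfalso
          rcases p with _ | ⟨p0, p⟩ <;> simp at hBp
  | @ptree a q x s hx hH =>
    rcases gmove_cases hm with ⟨l, r, s0, a0, ha0, hu, hv⟩ | ⟨l, r, s0, a0, b0, c0, hΔ, hu, hv⟩ |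
      ⟨l, r, a0, b0, hb0, hu, hv⟩
    · -- init at top: rebuild as tree
      rcases l with _ | ⟨c1, l₂⟩
      · simp only [List.nil_append, List.cons_append, List.append_assoc] at hv
        injection hv with h1 h2
        injection h2 with h3 h4
        injection h4 with h5 h6
        obtain rfl : a = a0 := by injection h3
        have h6' : x ++ TSym.cl :: ([] : List (TSym U)) = strOf s0 ++ TSym.cl :: r := by
          simpa using h6
        obtain ⟨hxs, hwr⟩ := bal0_uniq (seval_bal0 hx) (bal0_strOf s0) h6'
        subst hxs; subst hu
        have := FEval.tree ha0 hx hH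
        simpa [List.append_assoc, ← hwr] using this
      · simp only [List.cons_append, List.append_assoc] at hv
        injection hv with h1 h2
        subst h1; subst hu
        rcases l₂ with _ | ⟨c2, l₃⟩
        · simp at h2
        injection h2 with h3 h4
        subst h3
        rcases l₃ with _ | ⟨c3, l₄⟩
        · simp at h4
        injection h4 with h5 h6
        subst h5
        have h2' : l₄ ++ ((TSym.op :: TSym.ltr a0 :: TSym.slash :: (strOf s0 ++ [TSym.cl])) ++ r)
            = x ++ TSym.cl :: ([] : List (TSym U)) := by simpa [List.append_assoc] using h6.symm
        rcases tri h2' with ⟨r₂, hx2, hr⟩ | ⟨l₃', hl₂, hw2⟩ | ⟨p, qq, hBp, hxp, hwp⟩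
        · subst hr
          have hg : GMove Q0 Δ γ (l₄ ++ ((TSym.op :: (strOf s0 ++ [TSym.cl])) ++ r₂)) x := by
            rw [hx2]
            simpa [List.append_assoc] using GMove.init (l := l₄) (r := r₂) (s := s0)
              (Q0 := Q0) (Δ := Δ) (γ := γ) ha0
          have hns2 : NoCS (l₄ ++ ((TSym.op :: (strOf s0 ++ [TSym.cl])) ++ r₂)) :=
            nocs_of_eq (a := [TSym.op, TSym.ltr a, TSym.slash]) (b := [TSym.cl]) hns (by simp)
          have := FEval.ptree (seval_back hx hns2 hg) hH
          simpa [List.append_assoc] using this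
        · simp at hw2
        · exfalso
          rcases p with _ | ⟨p0, p⟩
          · simp at hBp
          injection hBp with h3 h4
          rcases p with _ | ⟨p1, p⟩
          · simp at h4
          injection h4 with h5 h6'
          rcases p with _ | ⟨p2, p⟩
          · simp at h6'
          injection h6' with h7 h8
          obtain ⟨hp, hqq⟩ := strOf_snoc_cl h8
          subst hp; subst h3; subst h5; subst h7
          have hbal := seval_bal hx
          have hpre := seval_prefix hx l₄ _ hxp
          rw [hxp] at hbal
          simp at hbal
          omega
    · -- horiz
      rcases l with _ | ⟨c1, l₂⟩
      · simp only [List.nil_append, List.cons_append, List.append_assoc] at hv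
        injection hv with h1 h2
        injection h2 with h3 h4
        injection h4 with h5 h6
        obtain rfl : a = c0 := by injection h3
        have h6' : x ++ TSym.cl :: ([] : List (TSym U)) = strOf s0 ++ TSym.cl :: r := by
          simpa using h6
        obtain ⟨hxs, hwr⟩ := bal0_uniq (seval_bal0 hx) (bal0_strOf s0) h6'
        subst hxs; subst hu
        have := FEval.ptree (SEval.ltr (a := b0) hx) (Horiz.cons hΔ hH)
        simpa [List.append_assoc, ← hwr] using this
      · simp only [List.cons_append, List.append_assoc] at hv
        injection hv with h1 h2
        subst h1; subst hu
        rcases l₂ with _ | ⟨c2, l₃⟩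
        · simp at h2
        injection h2 with h3 h4
        subst h3
        rcases l₃ with _ | ⟨c3, l₄⟩
        · simp at h4
        injection h4 with h5 h6
        subst h5
        have h2' : l₄ ++ ((TSym.op :: TSym.ltr c0 :: TSym.slash :: (strOf s0 ++ [TSym.cl])) ++ r)
            = x ++ TSym.cl :: ([] : List (TSym U)) := by simpa [List.append_assoc] using h6.symm
        rcases tri h2' with ⟨r₂, hx2, hr⟩ | ⟨l₃', hl₂, hw2⟩ | ⟨p, qq, hBp, hxp, hwp⟩
        · subst hr
          have hg : GMove Q0 Δ γ
              (l₄ ++ ((TSym.op :: TSym.ltr a0 :: TSym.slash :: TSym.ltr b0 :: (strOf s0 ++ [TSym.cl])) ++ r₂)) x := by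
            rw [hx2]
            simpa [List.append_assoc] using GMove.horiz (l := l₄) (r := r₂) (s := s0)
              (Q0 := Q0) (γ := γ) hΔ
          have hns2 : NoCS (l₄ ++ ((TSym.op :: TSym.ltr a0 :: TSym.slash :: TSym.ltr b0 :: (strOf s0 ++ [TSym.cl])) ++ r₂)) :=
            nocs_of_eq (a := [TSym.op, TSym.ltr a, TSym.slash]) (b := [TSym.cl]) hns (by simp)
          have := FEval.ptree (seval_back hx hns2 hg) hH
          simpa [List.append_assoc] using this
        · simp at hw2
        · exfalso
          rcases p with _ | ⟨p0, p⟩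
          · simp at hBp
          injection hBp with h3 h4
          rcases p with _ | ⟨p1, p⟩
          · simp at h4
          injection h4 with h5 h6'
          rcases p with _ | ⟨p2, p⟩
          · simp at h6'
          injection h6' with h7 h8
          obtain ⟨hp, hqq⟩ := strOf_snoc_cl h8
          subst hp; subst h3; subst h5; subst h7
          have hbal := seval_bal hx
          have hpre := seval_prefix hx l₄ _ hxp
          rw [hxp] at hbal
          simp at hbal
          omega
    · -- vert
      rcases l with _ | ⟨c1, l₂⟩
      · simp at hv
      · simp only [List.cons_append, List.append_assoc] at hv
        injection hv with h1 h2
        subst h1; subst hu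
        rcases l₂ with _ | ⟨c2, l₃⟩
        · exfalso
          simp only [List.nil_append] at h2
          injection h2 with h3 h4
          exact hns [TSym.op, TSym.op, TSym.ltr a0, TSym.slash] (x ++ [TSym.cl])
            (by simp [h4.symm])
        injection h2 with h3 h4
        subst h3
        rcases l₃ with _ | ⟨c3, l₄⟩
        · simp at h4
        injection h4 with h5 h6
        subst h5
        have h2' : l₄ ++ ([TSym.ltr b0] ++ r) = x ++ TSym.cl :: ([] : List (TSym U)) := by
          simpa [List.append_assoc] using h6.symm
        rcases tri h2' with ⟨r₂, hx2, hr⟩ | ⟨l₃', hl₂, hw2⟩ | ⟨p, qq, hBp, hxp, hwp⟩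
        · subst hr
          have hg : GMove Q0 Δ γ (l₄ ++ ([TSym.op, TSym.ltr a0, TSym.slash, TSym.cl] ++ r₂)) x := by
            rw [hx2]
            simpa [List.append_assoc] using GMove.vert (l := l₄) (r := r₂)
              (Q0 := Q0) (Δ := Δ) hb0
          have hns2 : NoCS (l₄ ++ ([TSym.op, TSym.ltr a0, TSym.slash, TSym.cl] ++ r₂)) :=
            nocs_of_eq (a := [TSym.op, TSym.ltr a, TSym.slash]) (b := [TSym.cl]) hns (by simp)
          have := FEval.ptree (seval_back hx hns2 hg) hH
          simpa [List.append_assoc] using this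
        · simp at hw2
        · exfalso
          rcases p with _ | ⟨p0, p⟩ <;> simp at hBp

end Aux7


section Aux8

variable {U : Type} {Q0 : Set U} {Δ : Set (U × U × U)} {γ : U → Set U}

lemma rtg_to_fev {v : List (TSym U)} {qf : U}
    (h : Relation.ReflTransGen (GMove Q0 Δ γ) v (finalTree qf)) :
    NoCS v → FEval Q0 Δ γ v qf := by
  induction h using Relation.ReflTransGen.head_induction_on with
  | refl =>
    intro _
    exact FEval.ptree (x := []) SEval.nil (Horiz.nil qf)
  | head hab _ ih =>
    intro hns
    exact fev_back hns hab (ih (nocs_step hns hab))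

lemma accepts_iff_big {x : List (TSym U)} {qf : U}
    (hnsl : TSym.slash ∉ TSym.op :: (x ++ [TSym.cl])) :
    (∃ n, relPow (GMove Q0 Δ γ) n (TSym.op :: (x ++ [TSym.cl])) (finalTree qf)) ↔
      ∃ a ∈ Q0, ∃ s, SEval Q0 Δ γ x s ∧ Horiz Δ a s qf := by
  constructor
  · intro h
    have hrt := relPow_iff_rtg.1 h
    have hf := rtg_to_fev hrt (nocs_of_no_slash hnsl)
    generalize hgen : x ++ [TSym.cl] = y at hf
    cases hf with
    | @tree a q x' s ha hx hH =>
      obtain rfl : x = x' := by simpa using hgen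
      exact ⟨a, ha, s, hx, hH⟩
    | @ptree a q x' s hx hH =>
      exfalso
      have : TSym.slash ∈ x ++ [TSym.cl] := by rw [hgen]; simp
      exact hnsl (List.mem_cons_of_mem _ this)
  · rintro ⟨a, ha, s, hx, hH⟩
    apply relPow_iff_rtg.2
    have h1 := seval_moves (Q0 := Q0) (Δ := Δ) (γ := γ) hx [TSym.op] [TSym.cl]
    have h2 : GMove Q0 Δ γ ([TSym.op] ++ strOf s ++ [TSym.cl])
        ([TSym.op, TSym.ltr a, TSym.slash] ++ strOf s ++ [TSym.cl]) := by
      simpa using GMove.init (l := []) (r := []) (s := s) (Q0 := Q0) (Δ := Δ) (γ := γ) ha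
    have h3 := horiz_moves (Q0 := Q0) (γ := γ) (Δ := Δ) hH [] ([] : List (TSym U))
    refine Relation.ReflTransGen.trans (by simpa [List.append_assoc] using h1) ?_
    refine Relation.ReflTransGen.head (by simpa [List.append_assoc] using h2) ?_
    simpa [finalTree, List.append_assoc] using h3

end Aux8


section Aux9

variable {U : Type}

@[simp] lemma symRel_op (f : U → Set U) : symRel f TSym.op = TSym.op := rfl
@[simp] lemma symRel_cl (f : U → Set U) : symRel f TSym.cl = TSym.cl := rfl
@[simp] lemma symRel_slash (f : U → Set U) : symRel f TSym.slash = TSym.slash := rfl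
@[simp] lemma symRel_ltr (f : U → Set U) (a : U) : symRel f (TSym.ltr a) = TSym.ltr (f a) := rfl

/-- content strings of trees over the alphabet `Sa` -/
inductive ContStr (Sa : Set U) : List (TSym U) → Prop where
  | nil : ContStr Sa []
  | ltr {a : U} {w : List (TSym U)} : a ∈ Sa → ContStr Sa w → ContStr Sa (TSym.ltr a :: w)
  | tree {x w : List (TSym U)} : ContStr Sa x → ContStr Sa w →
      ContStr Sa (TSym.op :: (x ++ TSym.cl :: w))

lemma contstr_append {Sa : Set U} {x y : List (TSym U)} (hx : ContStr Sa x)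
    (hy : ContStr Sa y) : ContStr Sa (x ++ y) := by
  induction hx with
  | nil => exact hy
  | ltr ha _ ih => exact ContStr.ltr ha ih
  | tree hx1 _ ih1 ih2 =>
    have := ContStr.tree hx1 ih2
    simpa [List.append_assoc] using this

lemma tree_decomp {Sa : Set U} {t : List (TSym U)} (ht : t ∈ TreeSet Sa) :
    ∃ x, t = TSym.op :: (x ++ [TSym.cl]) ∧ ContStr Sa x := by
  induction ht with
  | nil => exact ⟨[], rfl, ContStr.nil⟩
  | @single x hx =>
    obtain ⟨a, ha, rfl⟩ := hx
    exact ⟨[TSym.ltr a], rfl, ContStr.ltr ha ContStr.nil⟩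
  | @concat x y _ _ ih1 ih2 =>
    obtain ⟨x1, hx1, hc1⟩ := ih1
    obtain ⟨x2, hx2, hc2⟩ := ih2
    obtain rfl : x = x1 := by
      injection hx1 with h1 h2
      simpa using h2
    obtain rfl : y = x2 := by
      injection hx2 with h1 h2
      simpa using h2
    exact ⟨x ++ y, rfl, contstr_append hc1 hc2⟩
  | @encap t0 _ ih =>
    obtain ⟨x, hx, hc⟩ := ih
    refine ⟨t0, rfl, ?_⟩
    rw [hx]
    exact ContStr.tree hc ContStr.nil

lemma contstr_no_slash {Sa : Set U} {x : List (TSym U)} (h : ContStr Sa x) :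
    TSym.slash ∉ x := by
  induction h with
  | nil => simp
  | ltr _ _ ih => simp [ih]
  | tree _ _ ih1 ih2 => simp [ih1, ih2]

lemma contstr_bal {Sa : Set U} {x : List (TSym U)} (h : ContStr Sa x) : bal x = 0 := by
  induction h with
  | nil => simp
  | ltr _ _ ih => simpa using ih
  | tree _ _ ih1 ih2 => simp [ih1, ih2]

lemma contstr_bal0 {Sa : Set U} {x : List (TSym U)} (h : ContStr Sa x) : Bal0 x := by
  refine ⟨contstr_bal h, ?_⟩
  induction h with
    | nil =>
      intro p q hpq
      have : p = [] := by simpa using (List.append_eq_nil_iff.1 hpq.symm).1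
      simp [this]
    | @ltr a w ha hw ih =>
      intro p q hpq
      rcases p with _ | ⟨c, p⟩
      · simp
      · injection hpq with h1 h2
        subst h1
        have := ih p q h2
        simpa using this
    | @tree x w hx hw ihx ihw =>
      intro p q hpq
      rcases p with _ | ⟨c, p⟩
      · simp
      · injection hpq with h1 h2
        subst h1
        have hbx : bal x = 0 := contstr_bal hx
        rcases List.append_eq_append_iff.1 h2.symm with ⟨t, ht, h3⟩ | ⟨t, ht, h3⟩
        · have h5 := ihx p t ht
          simp only [bal_cons, wt_op]
          omega
        · rcases t with _ | ⟨c2, t⟩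
          · simp [ht, hbx]
          · obtain ⟨rfl, rfl⟩ : c2 = TSym.cl ∧ w = t ++ q := by
              constructor <;> injection h3 with h4 h5 <;> simp_all
            have := ihw t q rfl
            simp [ht, hbx]
            omega

lemma bal_map {f : U → Set U} (x : List (TSym U)) :
    bal (x.map (symRel f)) = bal x := by
  induction x with
  | nil => rfl
  | cons c x ih =>
    have : wt (symRel f c) = wt c := by cases c <;> rfl
    simp [this, ih]

lemma bal0_map {f : U → Set U} {x : List (TSym U)} (h : Bal0 x) :
    Bal0 (x.map (symRel f)) := by
  constructor
  · rw [bal_map]; exact h.1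
  · intro p q hpq
    obtain ⟨p0, q0, rfl, hp0, hq0⟩ := List.map_eq_append_iff.1 hpq
    rw [← hp0, bal_map]
    exact h.2 p0 q0 rfl

lemma no_slash_map {f : U → Set U} {x : List (TSym U)} (h : TSym.slash ∉ x) :
    TSym.slash ∉ x.map (symRel f) := by
  intro hm
  obtain ⟨c, hc, hce⟩ := List.mem_map.1 hm
  cases c <;> simp at hce
  exact h hc

lemma treeRel_tree (f : U → Set U) (x : List (TSym U)) :
    treeRel f (TSym.op :: (x ++ [TSym.cl])) =
      TSym.op :: (x.map (symRel f) ++ [TSym.cl]) := by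
  simp [treeRel]

lemma treeRel_mem_treeSet {Sa : Set U} {t : List (TSym U)} (ht : t ∈ TreeSet Sa) :
    treeRel (sing : U → Set U) t ∈ TreeSet (sing '' Sa) := by
  induction ht with
  | nil => exact IsTree.nil
  | @single x hx =>
    obtain ⟨a, ha, rfl⟩ := hx
    exact IsTree.single ⟨sing a, ⟨a, ha, rfl⟩, rfl⟩
  | @concat x y _ _ ih1 ih2 =>
    have h1 : IsTree (ltrs (sing '' Sa)) (TSym.op :: (x.map (symRel sing) ++ [TSym.cl])) := by
      simpa [treeRel, TreeSet] using ih1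
    have h2 : IsTree (ltrs (sing '' Sa)) (TSym.op :: (y.map (symRel sing) ++ [TSym.cl])) := by
      simpa [treeRel, TreeSet] using ih2
    have := IsTree.concat h1 h2
    simpa [treeRel, TreeSet] using this
  | @encap t0 _ ih =>
    have := IsTree.encap ih
    simpa [treeRel, TreeSet] using this

end Aux9


section Aux10

variable {U : Type} {Sa Q Qf Q0 : Set U} {Δ : Set (U × U × U)} {γ : U → Set U}

/-- iterated subset-transition -/
def foldD (Sa : Set U) (γ : U → Set U) (Δ : Set (U × U × U)) (a' : Set U)
    (l : List (Set U)) : Set U :=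
  l.foldl (subsetDelta Sa γ Δ) a'

@[simp] lemma foldD_nil (a' : Set U) : foldD Sa γ Δ a' [] = a' := rfl

@[simp] lemma foldD_cons (a' B : Set U) (l : List (Set U)) :
    foldD Sa γ Δ a' (B :: l) = foldD Sa γ Δ (subsetDelta Sa γ Δ a' B) l := rfl

lemma horiz_nil_inv {a q : U} (h : Horiz Δ a [] q) : q = a := by cases h; rfl

lemma horiz_cons_inv {a b q : U} {s : List U} (h : Horiz Δ a (b :: s) q) :
    ∃ c, (a, b, c) ∈ Δ ∧ Horiz Δ c s q := by
  cases h with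
  | cons hΔ hh => exact ⟨_, hΔ, hh⟩

lemma subsetDelta_sub (hwf : GWF Sa Q Qf Q0 Δ γ) (a' b' : Set U) :
    subsetDelta Sa γ Δ a' b' ⊆ Q := by
  rintro c ⟨a, -, b, -, h⟩
  exact (hwf.2.2.2.2.1 _ h).2.2

lemma subsetDelta_notSa (hpure : PureG Sa Q Qf Q0 Δ γ) (a' b' : Set U) :
    ∀ c ∈ subsetDelta Sa γ Δ a' b', c ∉ Sa := by
  rintro c ⟨a, -, b, -, h⟩
  exact (hpure.1 _ h).2

lemma foldD_sub (hwf : GWF Sa Q Qf Q0 Δ γ) {a' : Set U} (ha : a' ⊆ Q)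
    (l : List (Set U)) : foldD Sa γ Δ a' l ⊆ Q := by
  induction l generalizing a' with
  | nil => exact ha
  | cons B l ih => exact ih (subsetDelta_sub hwf a' B)

lemma foldD_notSa (hpure : PureG Sa Q Qf Q0 Δ γ) {a' : Set U}
    (ha : ∀ c ∈ a', c ∉ Sa) (l : List (Set U)) :
    ∀ c ∈ foldD Sa γ Δ a' l, c ∉ Sa := by
  induction l generalizing a' with
  | nil => exact ha
  | cons B l ih => exact ih (subsetDelta_notSa hpure a' B)

lemma gammaExt_sing (hpure : PureG Sa Q Qf Q0 Δ γ) {a : U} (ha : a ∈ Sa) {c : U} :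
    c ∈ gammaExt Sa γ (sing a) ↔ c = a := by
  constructor
  · rintro ⟨b, hb, hc | ⟨hcb, -⟩⟩
    · rw [show b = a from hb, hpure.2.1 a ha] at hc
      exact absurd hc (Set.notMem_empty c)
    · exact hcb.trans hb
  · intro h
    exact ⟨a, rfl, Or.inr ⟨h, ha⟩⟩

lemma gammaExt_of_disj {q' : Set U} (hd : ∀ p ∈ q', p ∉ Sa) {c : U} :
    c ∈ gammaExt Sa γ q' ↔ ∃ p ∈ q', c ∈ γ p := by
  constructor
  · rintro ⟨b, hb, hc | ⟨rfl, hSa⟩⟩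
    · exact ⟨b, hb, hc⟩
    · exact absurd hSa (hd c hb)
  · rintro ⟨p, hp, hc⟩
    exact ⟨p, hp, Or.inl hc⟩

lemma horiz'_det {a' q' : Set U} {u' : List (Set U)}
    (h : Horiz (subsetRules Sa γ Δ Q) a' u' q') : q' = foldD Sa γ Δ a' u' := by
  induction h with
  | nil => rfl
  | @cons a b c q s hm _ ih =>
    obtain ⟨-, -, hc⟩ := hm
    have hc' : c = subsetDelta Sa γ Δ a b := by simpa using hc
    rw [hc'] at ih
    exact ih

lemma horiz'_foldD (hwf : GWF Sa Q Qf Q0 Δ γ) {a' : Set U} (ha : a' ⊆ Q)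
    {u' : List (Set U)} (hu : ∀ B ∈ u', B ⊆ Q) :
    Horiz (subsetRules Sa γ Δ Q) a' u' (foldD Sa γ Δ a' u') := by
  induction u' generalizing a' with
  | nil => exact Horiz.nil a'
  | cons B l ih =>
    refine Horiz.cons (c := subsetDelta Sa γ Δ a' B) ⟨ha, hu B List.mem_cons_self, rfl⟩ ?_
    exact ih (subsetDelta_sub hwf a' B) (fun B' hB' => hu B' (List.mem_cons_of_mem _ hB'))

lemma foldD_mem {u' : List (Set U)} :
    ∀ {a' : Set U} {q : U}, q ∈ foldD Sa γ Δ a' u' ↔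
      ∃ a ∈ a', ∃ s, List.Forall₂ (fun b B => b ∈ gammaExt Sa γ B) s u' ∧ Horiz Δ a s q := by
  induction u' with
  | nil =>
    intro a' q
    constructor
    · intro h; exact ⟨q, h, [], List.Forall₂.nil, Horiz.nil q⟩
    · rintro ⟨a, ha, s, hF, hH⟩
      cases hF
      obtain rfl := horiz_nil_inv hH
      exact ha
  | cons B l ih =>
    intro a' q
    constructor
    · intro h
      obtain ⟨c, ⟨a, ha, b, hb, hΔ⟩, s, hF, hH⟩ := (by simpa using ih.1 h :
        ∃ c ∈ subsetDelta Sa γ Δ a' B, ∃ s,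
          List.Forall₂ (fun b B => b ∈ gammaExt Sa γ B) s l ∧ Horiz Δ c s q)
      exact ⟨a, ha, b :: s, List.Forall₂.cons hb hF, Horiz.cons hΔ hH⟩
    · rintro ⟨a, ha, s, hF, hH⟩
      cases hF with
      | cons hb hF' =>
        obtain ⟨c, hΔ, hH'⟩ := horiz_cons_inv hH
        exact ih.2 ⟨c, ⟨a, ha, _, hb, hΔ⟩, _, hF', hH'⟩

end Aux10


section Aux11

variable {U : Type} {Sa Q Qf Q0 : Set U} {Δ : Set (U × U × U)} {γ : U → Set U}

/-- the canonical run of the subset automaton on a content string -/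
inductive Sim (Sa : Set U) (γ : U → Set U) (Δ : Set (U × U × U)) (Q0 : Set U) :
    List (TSym U) → List (Set U) → Prop where
  | nil : Sim Sa γ Δ Q0 [] []
  | ltr {a : U} {w : List (TSym U)} {s' : List (Set U)} :
      a ∈ Sa → Sim Sa γ Δ Q0 w s' → Sim Sa γ Δ Q0 (TSym.ltr a :: w) (sing a :: s')
  | tree {x w : List (TSym U)} {u' s' : List (Set U)} :
      Sim Sa γ Δ Q0 x u' → Sim Sa γ Δ Q0 w s' →
      Sim Sa γ Δ Q0 (TSym.op :: (x ++ TSym.cl :: w)) (foldD Sa γ Δ Q0 u' :: s')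

lemma sim_exists {x : List (TSym U)} (h : ContStr Sa x) :
    ∃ u', Sim Sa γ Δ Q0 x u' := by
  induction h with
  | nil => exact ⟨[], Sim.nil⟩
  | ltr ha _ ih => obtain ⟨s', hs⟩ := ih; exact ⟨_, Sim.ltr ha hs⟩
  | tree _ _ ih1 ih2 =>
    obtain ⟨u', h1⟩ := ih1; obtain ⟨s', h2⟩ := ih2
    exact ⟨_, Sim.tree h1 h2⟩

lemma sim_contstr {x : List (TSym U)} {u' : List (Set U)} (h : Sim Sa γ Δ Q0 x u') :
    ContStr Sa x := by
  induction h with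
  | nil => exact ContStr.nil
  | ltr ha _ ih => exact ContStr.ltr ha ih
  | tree _ _ ih1 ih2 => exact ContStr.tree ih1 ih2

lemma sim_sub (hwf : GWF Sa Q Qf Q0 Δ γ) {x : List (TSym U)} {u' : List (Set U)}
    (h : Sim Sa γ Δ Q0 x u') : ∀ B ∈ u', B ⊆ Q := by
  induction h with
  | nil => simp
  | @ltr a w s' ha _ ih =>
    intro B hB
    rcases List.mem_cons.1 hB with rfl | hB
    · intro c hc
      exact hwf.2.1 ((show c = a from hc) ▸ ha)
    · exact ih B hB
  | @tree x w u' s' _ _ ih1 ih2 =>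
    intro B hB
    rcases List.mem_cons.1 hB with rfl | hB
    · exact foldD_sub hwf hwf.2.2.2.1 u'
    · exact ih2 B hB

lemma sim_to_seval' (hwf : GWF Sa Q Qf Q0 Δ γ) {x : List (TSym U)} {u' : List (Set U)}
    (h : Sim Sa γ Δ Q0 x u') :
    SEval ({Q0} : Set (Set U)) (subsetRules Sa γ Δ Q) sing (x.map (symRel sing)) u' := by
  induction h with
  | nil => exact SEval.nil
  | ltr ha _ ih => exact SEval.ltr ih
  | @tree x w u' s' hx _ ih1 ih2 =>
    have hmem : Q0 ∈ ({Q0} : Set (Set U)) := rfl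
    have hbm : foldD Sa γ Δ Q0 u' ∈ sing (foldD Sa γ Δ Q0 u') := rfl
    have := SEval.tree hmem ih1 (horiz'_foldD hwf hwf.2.2.2.1 (sim_sub hwf hx)) hbm ih2
    simpa using this

lemma seval'_to_sim {x : List (TSym U)} (hc : ContStr Sa x) :
    ∀ {s' : List (Set U)},
      SEval ({Q0} : Set (Set U)) (subsetRules Sa γ Δ Q) sing (x.map (symRel sing)) s' →
      Sim Sa γ Δ Q0 x s' := by
  induction hc with
  | nil =>
    intro s' h
    cases h
    exact Sim.nil
  | @ltr a w ha _ ih =>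
    intro s' h
    simp only [List.map_cons, symRel_ltr] at h
    cases h with
    | ltr hw => exact Sim.ltr ha (ih hw)
  | @tree x w hcx hcw ihx ihw =>
    intro s' h
    simp only [List.map_cons, List.map_append, symRel_op, symRel_cl] at h
    generalize hg : x.map (symRel sing) ++ TSym.cl :: w.map (symRel sing) = y at h
    cases h with
    | @tree a' q' b' x' w' s₁' s₀' ha' hx' hH' hb' hw' =>
      obtain ⟨hxx, hww⟩ := bal0_uniq (bal0_map (contstr_bal0 hcx)) (seval_bal0 hx') hg
      rw [← hxx] at hx'
      rw [← hww] at hw'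
      have haq : Q0 = a' := (show a' = Q0 from ha').symm
      subst haq
      obtain rfl : q' = foldD Sa γ Δ Q0 s₁' := horiz'_det hH'
      obtain rfl : b' = foldD Sa γ Δ Q0 s₁' := hb'
      exact Sim.tree (ihx hx') (ihw hw')
    | @ptree a' q' b' x' w' s₁' s₀' hx' hH' hb' hw' =>
      exfalso
      rcases x with _ | ⟨x0, x1⟩
      · simp at hg
      rcases x0 <;> simp only [List.map_cons, symRel_op, symRel_cl, symRel_slash,
        symRel_ltr, List.cons_append] at hg <;> injection hg with h1 h2
      · cases h1
      · cases h1
      · cases h1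
      rcases x1 with _ | ⟨x1h, x2⟩
      · simp at h2
      rcases x1h <;> simp only [List.map_cons, symRel_op, symRel_cl, symRel_slash,
        symRel_ltr, List.cons_append] at h2 <;> injection h2 with h3 h4
      · cases h3
      · cases h3
      · exact contstr_no_slash hcx (by simp)
      · cases h3

end Aux11


section Aux12

variable {U : Type} {Sa Q Qf Q0 : Set U} {Δ : Set (U × U × U)} {γ : U → Set U}

lemma sim_seval (hpure : PureG Sa Q Qf Q0 Δ γ) {x : List (TSym U)} {u' : List (Set U)}
    (hs : Sim Sa γ Δ Q0 x u') :
    ∀ {s : List U}, SEval Q0 Δ γ x s ↔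
      List.Forall₂ (fun b B => b ∈ gammaExt Sa γ B) s u' := by
  induction hs with
  | nil =>
    intro s
    constructor
    · intro h; cases h; exact List.Forall₂.nil
    · intro h; cases h; exact SEval.nil
  | @ltr a w s' ha _ ih =>
    intro s
    constructor
    · intro h
      cases h with
      | ltr hw => exact List.Forall₂.cons ((gammaExt_sing hpure ha).2 rfl) (ih.1 hw)
    · intro h
      rcases h with _ | ⟨hb, hF⟩
      have hba := (gammaExt_sing hpure ha).1 hb
      rw [hba]
      exact SEval.ltr (ih.2 hF)
  | @tree x w u'' s' hsx hsw ihx ihw =>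
    intro s
    constructor
    · intro h
      generalize hg : x ++ TSym.cl :: w = y at h
      cases h with
      | @tree a q b x' w' s₁ s₀ ha hx' hH hb hw' =>
        obtain ⟨hxx, hww⟩ := bal0_uniq (contstr_bal0 (sim_contstr hsx)) (seval_bal0 hx') hg
        rw [← hxx] at hx'
        rw [← hww] at hw'
        refine List.Forall₂.cons ?_ (ihw.1 hw')
        have hq : q ∈ foldD Sa γ Δ Q0 u'' := foldD_mem.2 ⟨a, ha, s₁, ihx.1 hx', hH⟩
        exact ⟨q, hq, Or.inl hb⟩
      | @ptree a q b x' w' s₁ s₀ hx' hH hb hw' =>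
        exfalso
        rcases x with _ | ⟨x0, x1⟩
        · simp at hg
        injection hg with h1 h2
        rcases x1 with _ | ⟨x1h, x2⟩
        · simp at h2
        injection h2 with h3 h4
        exact contstr_no_slash (sim_contstr hsx) (by simp [h3])
    · intro h
      rcases h with _ | ⟨hb, hF⟩
      have hd : ∀ c ∈ foldD Sa γ Δ Q0 u'', c ∉ Sa :=
        foldD_notSa hpure (fun c hc => (hpure.2.2.2.1 hc).2) u''
      obtain ⟨p, hp, hbp⟩ := (gammaExt_of_disj hd).1 hb
      obtain ⟨a, ha, s₁, hF₁, hH⟩ := foldD_mem.1 hp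
      exact SEval.tree ha (ihx.2 hF₁) hH hbp (ihw.2 hF)

end Aux12

/-- final-state correspondence in the subset construction:
with `A` a GNFSTA with pure states, `A'` its subset-construction DFSTA, and
`t ∈ T(Σ)` with counterpart `t'`, there exist `q_f ∈ Q_f` and `n` with
`t ⇒ⁿ ⟨q_f/⟩` iff there exist `q'_f ∈ Q'_f` and `m` with
`t' ⇒ᵐ_{A'} ⟨q'_f/⟩`; consequently `t ∈ L(A)` iff `t' ∈ L(A')`. -/
theorem subset_final_correspondence {U : Type} (Sa Q Qf Q0 : Set U)
    (Δ : Set (U × U × U)) (γ : U → Set U)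
    (hwf : GWF Sa Q Qf Q0 Δ γ) (hpure : PureG Sa Q Qf Q0 Δ γ)
    (t : List (TSym U)) (ht : t ∈ TreeSet Sa) :
    ((∃ qf ∈ Qf, ∃ n : ℕ, relPow (GMove Q0 Δ γ) n t (finalTree qf)) ↔
      (∃ qf' ∈ {q' : Set U | q' ⊆ Q ∧ (q' ∩ Qf).Nonempty}, ∃ m : ℕ,
        relPow (NMove Q0 (subsetRules Sa γ Δ Q)) m (treeRel sing t)
          (finalTree qf'))) ∧
    (t ∈ GLang Sa Q0 Δ γ Qf ↔
      treeRel sing t ∈ NLang (sing '' Sa) Q0 (subsetRules Sa γ Δ Q)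
        {q' : Set U | q' ⊆ Q ∧ (q' ∩ Qf).Nonempty}) := by
  obtain ⟨x, rfl, hcx⟩ := tree_decomp ht
  have hnsl : TSym.slash ∉ TSym.op :: (x ++ [TSym.cl]) := by
    have h1 := contstr_no_slash hcx
    intro hm
    rcases List.mem_cons.1 hm with h | h
    · simp at h
    · rcases List.mem_append.1 h with h | h
      · exact h1 h
      · simp at h
  have hnsl' : TSym.slash ∉ TSym.op :: (x.map (symRel (sing : U → Set U)) ++ [TSym.cl]) := by
    have h1 := no_slash_map (f := (sing : U → Set U)) (contstr_no_slash hcx)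
    intro hm
    rcases List.mem_cons.1 hm with h | h
    · simp at h
    · rcases List.mem_append.1 h with h | h
      · exact h1 h
      · simp at h
  have ht' : treeRel (sing : U → Set U) (TSym.op :: (x ++ [TSym.cl])) =
      TSym.op :: (x.map (symRel sing) ++ [TSym.cl]) := treeRel_tree _ _
  have hA : ∀ qf : U, (∃ n, relPow (GMove Q0 Δ γ) n (TSym.op :: (x ++ [TSym.cl]))
      (finalTree qf)) ↔ ∃ a ∈ Q0, ∃ s, SEval Q0 Δ γ x s ∧ Horiz Δ a s qf :=
    fun qf => accepts_iff_big hnsl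
  have hB : ∀ qf' : Set U, (∃ m, relPow (GMove ({Q0} : Set (Set U)) (subsetRules Sa γ Δ Q) sing)
        m (TSym.op :: (x.map (symRel sing) ++ [TSym.cl])) (finalTree qf')) ↔
      ∃ a' ∈ ({Q0} : Set (Set U)), ∃ s',
        SEval ({Q0} : Set (Set U)) (subsetRules Sa γ Δ Q) sing (x.map (symRel sing)) s' ∧
        Horiz (subsetRules Sa γ Δ Q) a' s' qf' :=
    fun qf' => accepts_iff_big hnsl'
  have key : (∃ qf ∈ Qf, ∃ n : ℕ, relPow (GMove Q0 Δ γ) n (TSym.op :: (x ++ [TSym.cl]))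
        (finalTree qf)) ↔
      (∃ qf' ∈ {q' : Set U | q' ⊆ Q ∧ (q' ∩ Qf).Nonempty}, ∃ m : ℕ,
        relPow (NMove Q0 (subsetRules Sa γ Δ Q)) m
          (treeRel sing (TSym.op :: (x ++ [TSym.cl]))) (finalTree qf')) := by
    constructor
    · rintro ⟨qf, hqf, hn⟩
      obtain ⟨a, ha, s, hse, hH⟩ := (hA qf).1 hn
      obtain ⟨u', hsim⟩ := sim_exists (Q0 := Q0) (γ := γ) (Δ := Δ) hcx
      refine ⟨foldD Sa γ Δ Q0 u', ⟨foldD_sub hwf hwf.2.2.2.1 u', ⟨qf, ?_, hqf⟩⟩, ?_⟩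
      · exact foldD_mem.2 ⟨a, ha, s, (sim_seval hpure hsim).1 hse, hH⟩
      · rw [ht']
        exact (hB _).2 ⟨Q0, rfl, u', sim_to_seval' hwf hsim,
          horiz'_foldD hwf hwf.2.2.2.1 (sim_sub hwf hsim)⟩
    · rintro ⟨qf', ⟨hsub, qf, hqf1, hqf2⟩, hm⟩
      rw [ht'] at hm
      obtain ⟨a', ha', s', hse', hH'⟩ := (hB qf').1 hm
      have haQ : a' = Q0 := ha'
      rw [haQ] at hH'
      have hsim := seval'_to_sim hcx hse'
      have hqd : qf' = foldD Sa γ Δ Q0 s' := horiz'_det hH'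
      rw [hqd] at hqf1
      obtain ⟨a, ha, s, hF, hH⟩ := foldD_mem.1 hqf1
      exact ⟨qf, hqf2, (hA qf).2 ⟨a, ha, s, (sim_seval hpure hsim).2 hF, hH⟩⟩
  refine ⟨key, ?_⟩
  constructor
  · intro hmem
    obtain ⟨htr, qf, hqf, hrtg⟩ := hmem
    obtain ⟨qf', hS, m, hm⟩ := key.1 ⟨qf, hqf, relPow_iff_rtg.2 hrtg⟩
    exact ⟨treeRel_mem_treeSet ht, qf', hS, relPow_iff_rtg.1 ⟨m, hm⟩⟩
  · intro hmem
    obtain ⟨htr, qf', hS, hrtg⟩ := hmem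
    obtain ⟨qf, hqf, n, hn⟩ := key.2 ⟨qf', hS, relPow_iff_rtg.2 hrtg⟩
    exact ⟨ht, qf, hqf, relPow_iff_rtg.1 ⟨n, hn⟩⟩

end StringTree
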